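/- arXiv:2207.12257 — 8 statements merged into one kernel-verified Lean document; each statement's English description precedes it below -/
import Mathlib

section
/- Let S be an additive abelian group and χ : S → ℂˣ a group homomorphism. On the complex vector space with basis {c} ∪ {A_{α,m} : α ∈ S, m ∈ ℤ}, the bilinear operation determined by [c, x] = [x, c] = 0 for all x and [A_{α,m}, A_{β,n}] = (χ(mβ − nα) − χ(nα − mβ))·A_{α+β,m+n} + m·δ_{α+β,0}·δ_{m+n,0}·c (for α,β ∈ S, m,n ∈ ℤ) is a Lie bracket: it is alternating and satisfies the Jacobi identity. -/
open scoped Classical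

/-- The underlying vector space `ℂ ⊕ ((S × ℤ) →₀ ℂ)` of the trigonometric Lie algebra `Â_S`. -/
abbrev TrigA (S : Type*) := ℂ × ((S × ℤ) →₀ ℂ)

/-- The central basis element `c`. -/
noncomputable def Acen (S : Type*) : TrigA S := (1, 0)

/-- The basis element `A_{α,m}`. -/
noncomputable def Agen {S : Type*} (α : S) (m : ℤ) : TrigA S := (0, Finsupp.single (α, m) 1)

/-- The value of the bracket on the basis elements `A_{α,m}`, `A_{β,n}`:
`[A_{α,m}, A_{β,n}] = (χ(mβ − nα) − χ(nα − mβ))·A_{α+β,m+n} + m·δ_{α+β,0}·δ_{m+n,0}·c`. -/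
noncomputable def AbrkBasis {S : Type*} [AddCommGroup S] (χ : S → ℂˣ) (p q : S × ℤ) :
    TrigA S :=
  ((if p.1 + q.1 = 0 ∧ p.2 + q.2 = 0 then (p.2 : ℂ) else 0),
    Finsupp.single (p.1 + q.1, p.2 + q.2)
      (((χ (p.2 • q.1 - q.2 • p.1) : ℂˣ) : ℂ) - ((χ (q.2 • p.1 - p.2 • q.1) : ℂˣ) : ℂ)))

/-- The bilinear operation on `Â_S` determined by `[c, ·] = [·, c] = 0` and the values
`AbrkBasis` on basis elements. -/
noncomputable def Abrk {S : Type*} [AddCommGroup S] (χ : S → ℂˣ) (x y : TrigA S) : TrigA S :=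
  x.2.sum fun p a => y.2.sum fun q b => (a * b) • AbrkBasis χ p q

/-!
Write `ω(p, q) = mβ − nα` for `p = (α, m)`, `q = (β, n)` and `s(x) = χ(x) − χ(−x)`, so that the
`A`-coefficient of `[A_p, A_q]` is `s(ω(p, q))`. The form `ω` is biadditive and alternating,
hence `ω(p + q, r) = ω(q, r) − ω(r, p)`, and the `A`-part of the Jacobi identity on basis
elements becomes `s(a) s(b − c) + s(b) s(c − a) + s(c) s(a − b) = 0`, the analogue of the sine
identity, which holds for every additive character. The central part only occurs when
`p + q + r = 0`; then `ω(p, q) = ω(q, r) = ω(r, p)` and the three coefficients sum to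
`2(m + n + k) s(ω(p, q)) = 0`.
-/

open Finsupp

theorem AddChar.sine_cyclic_sum_eq_zero {A K : Type*} [AddCommGroup A] [Field K]
    (ψ : AddChar A K) (a b c : A) :
    (ψ a - ψ (-a)) * (ψ (b - c) - ψ (c - b)) + (ψ b - ψ (-b)) * (ψ (c - a) - ψ (a - c))
      + (ψ c - ψ (-c)) * (ψ (a - b) - ψ (b - a)) = 0 := by
  have hne (x : A) : ψ x ≠ 0 := (ψ.val_isUnit x).ne_zero
  simp only [AddChar.map_neg_eq_inv, AddChar.map_sub_eq_div]
  field_simp [hne a, hne b, hne c]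
  ring

namespace TrigA

variable {S : Type*} [AddCommGroup S]

def pairing (p q : S × ℤ) : S := p.2 • q.1 - q.2 • p.1

theorem pairing_swap (p q : S × ℤ) : pairing q p = -pairing p q := (neg_sub _ _).symm

theorem pairing_add_left (p q r : S × ℤ) : pairing (p + q) r = pairing p r + pairing q r := by
  simp only [pairing, Prod.fst_add, Prod.snd_add, add_smul, smul_add]
  abel

theorem pairing_rotate_of_add_eq_zero {p q r : S × ℤ} (h : p + q + r = 0) :
    pairing q r = pairing p q ∧ pairing r p = pairing p q := by
  obtain rfl : r = -(p + q) := eq_neg_of_add_eq_zero_right h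
  simp only [pairing, Prod.fst_neg, Prod.snd_neg, Prod.fst_add, Prod.snd_add]
  constructor <;> module

variable (χ : S → ℂˣ)

noncomputable def structConst (p q : S × ℤ) : ℂ := χ (pairing p q) - χ (pairing q p)

theorem structConst_swap (p q : S × ℤ) : structConst χ q p = -structConst χ p q :=
  (neg_sub _ _).symm

theorem structConst_eq (p q : S × ℤ) :
    structConst χ p q = χ (pairing p q) - χ (-pairing p q) := by
  rw [structConst, pairing_swap p q]

theorem structConst_rotate_of_add_eq_zero {p q r : S × ℤ} (h : p + q + r = 0) :
    structConst χ q r = structConst χ p q ∧ structConst χ r p = structConst χ p q := by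
  obtain ⟨hqr, hrp⟩ := pairing_rotate_of_add_eq_zero h
  simp only [structConst_eq, hqr, hrp, and_self]

theorem AbrkBasis_eq (p q : S × ℤ) :
    AbrkBasis χ p q =
      (if p + q = 0 then (p.2 : ℂ) else 0, single (p + q) (structConst χ p q)) := by
  have hzero : (p.1 + q.1 = 0 ∧ p.2 + q.2 = 0) ↔ p + q = 0 :=
    (Prod.ext_iff (x := p + q) (y := 0)).symm
  simp only [AbrkBasis, hzero]
  rfl

theorem AbrkBasis_swap (p q : S × ℤ) : AbrkBasis χ q p = -AbrkBasis χ p q := by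
  rw [AbrkBasis_eq, AbrkBasis_eq, add_comm q, structConst_swap, single_neg]
  refine Prod.ext ?_ rfl
  split_ifs with h
  · simp [eq_neg_of_add_eq_zero_right (congrArg Prod.snd h)]
  · simp

noncomputable def bracketₗ : ((S × ℤ) →₀ ℂ) →ₗ[ℂ] ((S × ℤ) →₀ ℂ) →ₗ[ℂ] TrigA S :=
  linearCombination ℂ fun p => linearCombination ℂ (AbrkBasis χ p)

theorem Abrk_eq_bracketₗ (x y : TrigA S) : Abrk χ x y = bracketₗ χ x.2 y.2 := by
  simp only [Abrk, bracketₗ, linearCombination_apply, Finsupp.sum, LinearMap.coe_sum,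
    Finset.sum_apply, LinearMap.smul_apply, Finset.smul_sum, smul_smul]

theorem bracketₗ_single (p q : S × ℤ) (a b : ℂ) :
    bracketₗ χ (single p a) (single q b) = (a * b) • AbrkBasis χ p q := by
  simp [bracketₗ, smul_smul]

theorem bracketₗ_swap (f g : (S × ℤ) →₀ ℂ) : bracketₗ χ f g = -bracketₗ χ g f := by
  induction f using Finsupp.induction_linear with
  | zero => simp
  | add f₁ f₂ h₁ h₂ => simp only [map_add, LinearMap.add_apply, h₁, h₂, neg_add]
  | single p a =>
    induction g using Finsupp.induction_linear with
    | zero => simp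
    | add g₁ g₂ h₁ h₂ => simp only [map_add, LinearMap.add_apply, h₁, h₂, neg_add]
    | single q b =>
      rw [bracketₗ_single, bracketₗ_single, AbrkBasis_swap χ p q, smul_neg, neg_neg, mul_comm]

theorem bracketₗ_self (f : (S × ℤ) →₀ ℂ) : bracketₗ χ f f = 0 :=
  self_eq_neg.mp (bracketₗ_swap χ f f)

noncomputable def jacobiator (f g h : (S × ℤ) →₀ ℂ) : TrigA S :=
  bracketₗ χ (bracketₗ χ f g).2 h + bracketₗ χ (bracketₗ χ g h).2 f
    + bracketₗ χ (bracketₗ χ h f).2 g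

theorem jacobiator_rotate (f g h : (S × ℤ) →₀ ℂ) : jacobiator χ f g h = jacobiator χ g h f := by
  unfold jacobiator; abel

theorem jacobiator_zero_left (g h : (S × ℤ) →₀ ℂ) : jacobiator χ 0 g h = 0 := by
  simp [jacobiator]

theorem jacobiator_add_left (f₁ f₂ g h : (S × ℤ) →₀ ℂ) :
    jacobiator χ (f₁ + f₂) g h = jacobiator χ f₁ g h + jacobiator χ f₂ g h := by
  simp only [jacobiator, map_add, LinearMap.add_apply, Prod.snd_add]
  abel

variable {χ} (hχ : ∀ a b : S, χ (a + b) = χ a * χ b)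
include hχ

noncomputable def toAddChar : AddChar S ℂ where
  toFun x := χ x
  map_zero_eq_one' := by
    have h := hχ 0 0
    rw [add_zero, left_eq_mul] at h
    simp [h]
  map_add_eq_mul' a b := by simp [hχ]

theorem structConst_jacobi (p q r : S × ℤ) :
    structConst χ p q * structConst χ (p + q) r + structConst χ q r * structConst χ (q + r) p
      + structConst χ r p * structConst χ (r + p) q = 0 := by
  have hs (x y : S × ℤ) :
      structConst χ x y = toAddChar hχ (pairing x y) - toAddChar hχ (-pairing x y) :=
    structConst_eq χ x y
  have hrot (x y z : S × ℤ) : pairing (x + y) z = pairing y z - pairing z x := by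
    rw [pairing_add_left, pairing_swap z x]; abel
  simp only [hs, hrot, neg_sub]
  exact (toAddChar hχ).sine_cyclic_sum_eq_zero _ _ _

theorem AbrkBasis_jacobi (p q r : S × ℤ) :
    structConst χ p q • AbrkBasis χ (p + q) r + structConst χ q r • AbrkBasis χ (q + r) p
      + structConst χ r p • AbrkBasis χ (r + p) q = 0 := by
  have hqrp : q + r + p = p + q + r := by abel
  have hrpq : r + p + q = p + q + r := by abel
  simp only [AbrkBasis_eq, hqrp, hrpq]
  refine Prod.ext ?_ ?_
  · simp only [Prod.fst_add, Prod.smul_fst, smul_eq_mul, Prod.fst_zero]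
    split_ifs with h
    · obtain ⟨hqr, hrp⟩ := structConst_rotate_of_add_eq_zero χ h
      have hdeg : ((p.2 + q.2 + r.2 : ℤ) : ℂ) = 0 := by exact_mod_cast congrArg Prod.snd h
      rw [hqr, hrp]
      push_cast [Prod.snd_add] at hdeg ⊢
      linear_combination (2 * structConst χ p q) * hdeg
    · simp
  · simp only [Prod.snd_add, Prod.smul_snd, smul_single, smul_eq_mul, ← single_add,
      Prod.snd_zero, single_eq_zero]
    linear_combination structConst_jacobi hχ p q r

theorem jacobiator_single (p q r : S × ℤ) (a b c : ℂ) :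
    jacobiator χ (single p a) (single q b) (single r c) = 0 := by
  have hsnd (x y : S × ℤ) (u v : ℂ) :
      (bracketₗ χ (single x u) (single y v)).2 = single (x + y) (u * v * structConst χ x y) := by
    rw [bracketₗ_single, AbrkBasis_eq, Prod.smul_snd, smul_single, smul_eq_mul, mul_assoc]
  calc jacobiator χ (single p a) (single q b) (single r c)
      = (a * b * c) • (structConst χ p q • AbrkBasis χ (p + q) r
          + structConst χ q r • AbrkBasis χ (q + r) p
          + structConst χ r p • AbrkBasis χ (r + p) q) := by
        simp only [jacobiator, hsnd]
        simp only [bracketₗ_single]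
        module
    _ = 0 := by rw [AbrkBasis_jacobi hχ, smul_zero]

theorem jacobiator_eq_zero (f g h : (S × ℤ) →₀ ℂ) : jacobiator χ f g h = 0 := by
  induction f using Finsupp.induction_linear with
  | zero => exact jacobiator_zero_left χ g h
  | add f₁ f₂ h₁ h₂ => rw [jacobiator_add_left, h₁, h₂, add_zero]
  | single p a =>
    rw [jacobiator_rotate]
    induction g using Finsupp.induction_linear with
    | zero => exact jacobiator_zero_left χ _ _
    | add g₁ g₂ h₁ h₂ => rw [jacobiator_add_left, h₁, h₂, add_zero]
    | single q b =>
      rw [jacobiator_rotate]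
      induction h using Finsupp.induction_linear with
      | zero => exact jacobiator_zero_left χ _ _
      | add h₁ h₂ e₁ e₂ => rw [jacobiator_add_left, e₁, e₂, add_zero]
      | single r c => exact jacobiator_single hχ r p q c a b

end TrigA

theorem stmt0 {S : Type*} [AddCommGroup S] (χ : S → ℂˣ)
    (hχ : ∀ a b : S, χ (a + b) = χ a * χ b) :
    -- the operation is bilinear
    (∀ x y z : TrigA S, Abrk χ (x + y) z = Abrk χ x z + Abrk χ y z) ∧
    (∀ (c : ℂ) (x y : TrigA S), Abrk χ (c • x) y = c • Abrk χ x y) ∧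
    (∀ x y z : TrigA S, Abrk χ x (y + z) = Abrk χ x y + Abrk χ x z) ∧
    (∀ (c : ℂ) (x y : TrigA S), Abrk χ x (c • y) = c • Abrk χ x y) ∧
    -- it is determined by the prescribed values: `c` is central and on basis elements it is
    -- given by the trigonometric formula
    (∀ x : TrigA S, Abrk χ (Acen S) x = 0 ∧ Abrk χ x (Acen S) = 0) ∧
    (∀ (α β : S) (m n : ℤ),
      Abrk χ (Agen α m) (Agen β n) =
        (((χ (m • β - n • α) : ℂˣ) : ℂ) - ((χ (n • α - m • β) : ℂˣ) : ℂ)) • Agen (α + β) (m + n)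
          + (if α + β = 0 ∧ m + n = 0 then (m : ℂ) else 0) • Acen S) ∧
    -- it is alternating
    (∀ x : TrigA S, Abrk χ x x = 0) ∧
    -- and it satisfies the Jacobi identity
    (∀ x y z : TrigA S,
      Abrk χ (Abrk χ x y) z + Abrk χ (Abrk χ y z) x + Abrk χ (Abrk χ z x) y = 0) := by
  simp only [TrigA.Abrk_eq_bracketₗ]
  refine ⟨?_, ?_, ?_, ?_, ?_, ?_, ?_, ?_⟩
  · simp
  · simp
  · simp
  · simp
  · simp [Acen]
  · intro α β m n
    rw [Agen, Agen, TrigA.bracketₗ_single, one_mul, one_smul]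
    refine Prod.ext ?_ ?_ <;> simp only [AbrkBasis, Agen, Acen] <;> split_ifs <;> simp
  · exact fun x => TrigA.bracketₗ_self χ x.2
  · exact fun x y z => TrigA.jacobiator_eq_zero hχ x.2 y.2 z.2
end

section
/- The linear endomorphisms τ_B, τ_C, τ_D of Â_S determined by τ_B(c) = τ_C(c) = τ_D(c) = c and τ_B(A_{α,m}) = −(−1)^m A_{−α,m}, τ_C(A_{α,m}) = −(−1)^m χ(2α) A_{−α,m}, τ_D(A_{α,m}) = −χ(2α) A_{−α,m} (for α ∈ S, m ∈ ℤ) are Lie algebra automorphisms of Â_S, and each composed with itself is the identity (they have order 2). -/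
/-!
Each of `τ_B`, `τ_C`, `τ_D` fixes `c` and sends `A_{α,m}` to `-ψ(α,m) A_{-α,m}` for an additive
character `ψ` of `S × ℤ`, namely `(-1)^m`, `(-1)^m χ(2α)` and `χ(2α)`. For any such `ψ`, the
reflection `α ↦ -α` interchanges the two `χ`-terms of the structure constant, flipping its sign,
and this is compensated by `-ψ(p + q) = -ψ(p) ψ(q)`; on the central term `ψ(p) ψ(q) = ψ(0) = 1`.
So the bracket is preserved on basis elements, hence everywhere by bilinearity. The square of the
map multiplies `A_{α,m}` by `ψ(0, 2m)`, which is `1` for all three characters.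
-/

open scoped Classical

/-- The linear endomorphism of `Â_S` fixing `c` and sending `A_{α,m} ↦ cf(α,m) • A_{σ(α,m)}`. -/
noncomputable def twistA {S : Type*} (cf : S × ℤ → ℂ) (σ : S × ℤ → S × ℤ) :
    TrigA S →ₗ[ℂ] TrigA S :=
  LinearMap.prodMap LinearMap.id
    (Finsupp.lsum ℂ fun p => cf p • Finsupp.lsingle (σ p))

/-- `τ_B(c) = c`, `τ_B(A_{α,m}) = −(−1)^m A_{−α,m}`. -/
noncomputable def tauB (S : Type*) [AddCommGroup S] : TrigA S →ₗ[ℂ] TrigA S :=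
  twistA (fun p => -(-1 : ℂ) ^ p.2) (fun p => (-p.1, p.2))

/-- `τ_C(c) = c`, `τ_C(A_{α,m}) = −(−1)^m χ(2α) A_{−α,m}`. -/
noncomputable def tauC {S : Type*} [AddCommGroup S] (χ : S → ℂˣ) : TrigA S →ₗ[ℂ] TrigA S :=
  twistA (fun p => -(-1 : ℂ) ^ p.2 * ((χ (p.1 + p.1) : ℂˣ) : ℂ)) (fun p => (-p.1, p.2))

/-- `τ_D(c) = c`, `τ_D(A_{α,m}) = −χ(2α) A_{−α,m}`. -/
noncomputable def tauD {S : Type*} [AddCommGroup S] (χ : S → ℂˣ) : TrigA S →ₗ[ℂ] TrigA S :=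
  twistA (fun p => -((χ (p.1 + p.1) : ℂˣ) : ℂ)) (fun p => (-p.1, p.2))

section Twist

variable {S : Type*}

lemma twistA_apply (cf : S × ℤ → ℂ) (σ : S × ℤ → S × ℤ) (x : TrigA S) :
    twistA cf σ x = (x.1, x.2.sum fun p a => Finsupp.single (σ p) (cf p * a)) := by
  simp [twistA, Finsupp.lsum_apply, Finsupp.sum]

lemma twistA_snd_single (cf : S × ℤ → ℂ) (σ : S × ℤ → S × ℤ) (x : ℂ) (p : S × ℤ)
    (a : ℂ) :
    (twistA cf σ (x, Finsupp.single p a)).2 = Finsupp.single (σ p) (cf p * a) := by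
  simp only [twistA_apply, Finsupp.sum_single_index, mul_zero, Finsupp.single_zero]

lemma twistA_Acen (cf : S × ℤ → ℂ) (σ : S × ℤ → S × ℤ) :
    twistA cf σ (Acen S) = Acen S := by
  simp [twistA_apply, Acen]

lemma twistA_Agen (cf : S × ℤ → ℂ) (σ : S × ℤ → S × ℤ) (α : S) (m : ℤ) :
    twistA cf σ (Agen α m) = cf (α, m) • Agen (σ (α, m)).1 (σ (α, m)).2 := by
  ext1
  · simp [twistA_apply, Agen]
  · simp [Agen, twistA_snd_single]

lemma twistA_comp_self {cf : S × ℤ → ℂ} {σ : S × ℤ → S × ℤ} (hσ : Function.Involutive σ)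
    (hcf : ∀ p, cf (σ p) * cf p = 1) :
    (twistA cf σ).comp (twistA cf σ) = LinearMap.id := by
  rw [twistA, LinearMap.prodMap_comp, ← LinearMap.prodMap_id]
  congr 1
  refine Finsupp.lhom_ext fun p a => ?_
  simp only [LinearMap.comp_apply, Finsupp.lsum_single, LinearMap.smul_apply,
    Finsupp.lsingle_apply, Finsupp.smul_single, smul_eq_mul, hσ p, ← mul_assoc, hcf, one_mul,
    LinearMap.id_apply]

end Twist

section Reflection

variable {S : Type*} [AddCommGroup S]

noncomputable def reflTwist (ψ : AddChar (S × ℤ) ℂ) : TrigA S →ₗ[ℂ] TrigA S :=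
  twistA (fun p => -ψ p) (fun p => (-p.1, p.2))

lemma reflTwist_comp_self {ψ : AddChar (S × ℤ) ℂ} (hψ : ∀ m : ℤ, ψ (0, m + m) = 1) :
    (reflTwist ψ).comp (reflTwist ψ) = LinearMap.id := by
  refine twistA_comp_self (fun p => by simp) fun p => ?_
  rw [neg_mul_neg, ← AddChar.map_add_eq_mul, ← hψ p.2]
  congr 1
  ext <;> simp

lemma reflTwist_AbrkBasis (χ : S → ℂˣ) (ψ : AddChar (S × ℤ) ℂ) (p q : S × ℤ) :
    reflTwist ψ (AbrkBasis χ p q) = (ψ p * ψ q) • AbrkBasis χ (-p.1, p.2) (-q.1, q.2) := by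
  ext1
  · simp only [reflTwist, twistA_apply, AbrkBasis, Prod.smul_fst, smul_eq_mul, ← neg_add,
      neg_eq_zero]
    split_ifs with h
    · rw [← AddChar.map_add_eq_mul, show p + q = 0 from Prod.ext h.1 h.2,
        AddChar.map_zero_eq_one, one_mul]
    · rw [mul_zero]
  · simp only [reflTwist, AbrkBasis, twistA_snd_single, Prod.smul_snd, Finsupp.smul_single,
      smul_eq_mul, smul_neg, neg_add, neg_sub_neg]
    rw [show (p.1 + q.1, p.2 + q.2) = p + q from rfl, AddChar.map_add_eq_mul]
    congr 1
    ring

noncomputable def AbrkBilin (χ : S → ℂˣ) :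
    ((S × ℤ) →₀ ℂ) →ₗ[ℂ] ((S × ℤ) →₀ ℂ) →ₗ[ℂ] TrigA S :=
  Finsupp.linearCombination ℂ fun p => Finsupp.linearCombination ℂ (AbrkBasis χ p)

lemma Abrk_eq_AbrkBilin (χ : S → ℂˣ) (x y : TrigA S) :
    Abrk χ x y = AbrkBilin χ x.2 y.2 := by
  simp only [Abrk, AbrkBilin, Finsupp.linearCombination_apply, Finsupp.sum, LinearMap.sum_apply,
    LinearMap.smul_apply, Finset.smul_sum, smul_smul]

lemma reflTwist_Abrk (χ : S → ℂˣ) (ψ : AddChar (S × ℤ) ℂ) (x y : TrigA S) :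
    reflTwist ψ (Abrk χ x y) = Abrk χ (reflTwist ψ x) (reflTwist ψ y) := by
  set L : ((S × ℤ) →₀ ℂ) →ₗ[ℂ] ((S × ℤ) →₀ ℂ) :=
    Finsupp.lsum ℂ fun p => -ψ p • Finsupp.lsingle (-p.1, p.2)
  suffices (AbrkBilin χ).compr₂ (reflTwist ψ) = (AbrkBilin χ).compl₁₂ L L by
    rw [Abrk_eq_AbrkBilin, Abrk_eq_AbrkBilin]
    exact LinearMap.congr_fun₂ this x.2 y.2
  refine Finsupp.lhom_ext fun p a => Finsupp.lhom_ext fun q b => ?_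
  simp only [LinearMap.compr₂_apply, LinearMap.compl₁₂_apply, AbrkBilin, L, Finsupp.lsum_single,
    LinearMap.smul_apply, Finsupp.lsingle_apply, Finsupp.smul_single, smul_eq_mul,
    Finsupp.linearCombination_single, LinearMap.map_smul, reflTwist_AbrkBasis, smul_smul]
  congr 1
  ring

end Reflection

section Characters

variable {S : Type*} [AddCommGroup S]

noncomputable def signChar : AddChar (S × ℤ) ℂ where
  toFun p := (-1) ^ p.2
  map_zero_eq_one' := zpow_zero _
  map_add_eq_mul' p q := zpow_add₀ (by norm_num) _ _

noncomputable def doubleChar (χ : S → ℂˣ) (hχ : ∀ a b : S, χ (a + b) = χ a * χ b) :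
    AddChar (S × ℤ) ℂ where
  toFun p := χ (p.1 + p.1)
  map_zero_eq_one' := by
    have h := hχ 0 0
    rw [add_zero] at h
    show ((χ (0 + 0) : ℂˣ) : ℂ) = 1
    rw [add_zero, left_eq_mul.mp h, Units.val_one]
  map_add_eq_mul' p q := by
    rw [← Units.val_mul, ← hχ, Prod.fst_add, add_add_add_comm]

@[simp] lemma signChar_apply (p : S × ℤ) : signChar p = (-1 : ℂ) ^ p.2 := rfl

@[simp] lemma doubleChar_apply (χ : S → ℂˣ) (hχ : ∀ a b : S, χ (a + b) = χ a * χ b)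
    (p : S × ℤ) : doubleChar χ hχ p = χ (p.1 + p.1) := rfl

end Characters

theorem stmt1 {S : Type*} [AddCommGroup S] (χ : S → ℂˣ)
    (hχ : ∀ a b : S, χ (a + b) = χ a * χ b) :
    -- the three maps take the prescribed values on `c` and on the basis elements
    (tauB S (Acen S) = Acen S ∧ tauC χ (Acen S) = Acen S ∧ tauD χ (Acen S) = Acen S) ∧
    (∀ (α : S) (m : ℤ),
      tauB S (Agen α m) = (-(-1 : ℂ) ^ m) • Agen (-α) m ∧
      tauC χ (Agen α m) = (-(-1 : ℂ) ^ m * ((χ (α + α) : ℂˣ) : ℂ)) • Agen (-α) m ∧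
      tauD χ (Agen α m) = (-((χ (α + α) : ℂˣ) : ℂ)) • Agen (-α) m) ∧
    -- they are Lie algebra automorphisms: bijective and bracket preserving
    (Function.Bijective (tauB S) ∧ Function.Bijective (tauC χ) ∧
      Function.Bijective (tauD χ)) ∧
    (∀ x y : TrigA S, tauB S (Abrk χ x y) = Abrk χ (tauB S x) (tauB S y)) ∧
    (∀ x y : TrigA S, tauC χ (Abrk χ x y) = Abrk χ (tauC χ x) (tauC χ y)) ∧
    (∀ x y : TrigA S, tauD χ (Abrk χ x y) = Abrk χ (tauD χ x) (tauD χ y)) ∧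
    -- and each composed with itself is the identity (order 2)
    ((tauB S).comp (tauB S) = LinearMap.id ∧ (tauC χ).comp (tauC χ) = LinearMap.id ∧
      (tauD χ).comp (tauD χ) = LinearMap.id) := by
  have hB : tauB S = reflTwist signChar := rfl
  have hD : tauD χ = reflTwist (doubleChar χ hχ) := rfl
  have hC : tauC χ = reflTwist (signChar * doubleChar χ hχ) := by
    simp only [tauC, reflTwist, AddChar.coe_mul, Pi.mul_apply, signChar_apply, doubleChar_apply,
      neg_mul]
  have hχ0 : ∀ m : ℤ, doubleChar χ hχ (0, m + m) = 1 := fun _ =>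
    (doubleChar χ hχ).map_zero_eq_one
  have hsign : ∀ m : ℤ, signChar (S := S) (0, m + m) = 1 := fun m =>
    Even.neg_one_zpow (α := ℂ) ⟨m, rfl⟩
  have invB : (tauB S).comp (tauB S) = LinearMap.id := hB ▸ reflTwist_comp_self hsign
  have invC : (tauC χ).comp (tauC χ) = LinearMap.id :=
    hC ▸ reflTwist_comp_self fun m => by rw [AddChar.mul_apply, hsign, hχ0, one_mul]
  have invD : (tauD χ).comp (tauD χ) = LinearMap.id := hD ▸ reflTwist_comp_self hχ0
  refine ⟨⟨twistA_Acen _ _, twistA_Acen _ _, twistA_Acen _ _⟩,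
    fun α m => ⟨twistA_Agen _ _ α m, twistA_Agen _ _ α m, twistA_Agen _ _ α m⟩,
    ⟨Function.Involutive.bijective (LinearMap.congr_fun invB),
      Function.Involutive.bijective (LinearMap.congr_fun invC),
      Function.Involutive.bijective (LinearMap.congr_fun invD)⟩,
    hB ▸ reflTwist_Abrk χ _, hC ▸ reflTwist_Abrk χ _, hD ▸ reflTwist_Abrk χ _,
    invB, invC, invD⟩
end

section
/- Let K be a complex Lie algebra and Γ a group acting on K by Lie algebra automorphisms such that for every u, v ∈ K the set {g ∈ Γ : [g·u, v] ≠ 0} is finite. Define the bilinear operation [u,v]_Γ = ∑_{g∈Γ} [g·u, v] (a finite sum) and the subspace I_Γ = span_ℂ{g·u − u : g ∈ Γ, u ∈ K}. Then: (i) [x, v]_Γ ∈ I_Γ and [v, x]_Γ ∈ I_Γ for all x ∈ I_Γ and v ∈ K; (ii) [u,v]_Γ + [v,u]_Γ ∈ I_Γ for all u, v ∈ K; (iii) [[u,v]_Γ, w]_Γ + [[v,w]_Γ, u]_Γ + [[w,u]_Γ, v]_Γ ∈ I_Γ for all u, v, w ∈ K. In particular, the induced operation on the quotient space K/I_Γ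 is a Lie bracket. -/
open Function

section auxFinsum

variable {α β M : Type*} [AddCommMonoid M]

private lemma aux_inner_fin (f : α → β → M) (hf : {p : α × β | f p.1 p.2 ≠ 0}.Finite) (a : α) :
    (support (f a)).Finite := by
  have hsub : support (f a) ⊆ Prod.mk a ⁻¹' {p : α × β | f p.1 p.2 ≠ 0} := fun b hb => hb
  exact (hf.preimage (fun x _ y _ h => (congrArg Prod.snd h : x = y))).subset hsub

private lemma aux_outer_fin (f : α → β → M) (hf : {p : α × β | f p.1 p.2 ≠ 0}.Finite) :
    (support fun a => ∑ᶠ b, f a b).Finite := by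
  apply (hf.image Prod.fst).subset
  intro a ha
  have hex : ∃ b, f a b ≠ 0 := by
    by_contra h
    push_neg at h
    exact ha ((finsum_congr h).trans finsum_zero)
  obtain ⟨b, hb⟩ := hex
  exact ⟨(a, b), hb, rfl⟩

private lemma aux_swap (f : α → β → M) (hf : {p : α × β | f p.1 p.2 ≠ 0}.Finite) :
    ∑ᶠ a, ∑ᶠ b, f a b = ∑ᶠ b, ∑ᶠ a, f a b := by
  classical
  set s := hf.toFinset.image Prod.fst with hs
  set t := hf.toFinset.image Prod.snd with ht
  have hst : ∀ a b, f a b ≠ 0 → a ∈ s ∧ b ∈ t := fun a b h =>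
    ⟨Finset.mem_image.2 ⟨(a, b), hf.mem_toFinset.2 h, rfl⟩,
     Finset.mem_image.2 ⟨(a, b), hf.mem_toFinset.2 h, rfl⟩⟩
  have h1 : ∀ a : α, ∑ᶠ b, f a b = ∑ b ∈ t, f a b := fun a =>
    finsum_eq_sum_of_support_subset _ (fun b hb => (hst a b hb).2)
  have h2 : ∀ b : β, ∑ᶠ a, f a b = ∑ a ∈ s, f a b := fun b =>
    finsum_eq_sum_of_support_subset _ (fun a ha => (hst a b ha).1)
  rw [finsum_congr h1, finsum_congr h2]
  have hsup1 : support (fun a => ∑ b ∈ t, f a b) ⊆ ↑s := by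
    intro a ha
    by_contra hc
    exact ha (Finset.sum_eq_zero fun b _ => by
      by_contra hb; exact hc ((hst a b hb).1))
  have hsup2 : support (fun b => ∑ a ∈ s, f a b) ⊆ ↑t := by
    intro b hb
    by_contra hc
    exact hb (Finset.sum_eq_zero fun a _ => by
      by_contra ha; exact hc ((hst a b ha).2))
  rw [finsum_eq_sum_of_support_subset _ hsup1, finsum_eq_sum_of_support_subset _ hsup2]
  exact Finset.sum_comm

private lemma aux_add (f g : α → β → M) (hf : {p : α × β | f p.1 p.2 ≠ 0}.Finite)
    (hg : {p : α × β | g p.1 p.2 ≠ 0}.Finite) :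
    ∑ᶠ a, ∑ᶠ b, (f a b + g a b) = (∑ᶠ a, ∑ᶠ b, f a b) + ∑ᶠ a, ∑ᶠ b, g a b := by
  have h1 : ∀ a, ∑ᶠ b, (f a b + g a b) = (∑ᶠ b, f a b) + ∑ᶠ b, g a b := fun a =>
    finsum_add_distrib (aux_inner_fin f hf a) (aux_inner_fin g hg a)
  rw [finsum_congr h1]
  exact finsum_add_distrib (aux_outer_fin f hf) (aux_outer_fin g hg)

private lemma aux_neg {N : Type*} [SubtractionCommMonoid N] (f : α → β → N) :
    ∑ᶠ a, ∑ᶠ b, (-(f a b)) = -(∑ᶠ a, ∑ᶠ b, f a b) := by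
  rw [finsum_congr (fun a => finsum_neg_distrib (f a)), finsum_neg_distrib]

end auxFinsum

/-- The covariant operation `[u,v]_Γ = ∑_{g∈Γ} [g·u, v]` (a finite sum under the finiteness
hypothesis). -/
noncomputable def covBrk (Γ : Type*) {K : Type*} [LieRing K] [Group Γ]
    [DistribMulAction Γ K] (u v : K) : K :=
  ∑ᶠ g : Γ, ⁅g • u, v⁆

/-- The subspace `I_Γ = span_ℂ{g·u − u : g ∈ Γ, u ∈ K}`. -/
def covIdeal (Γ : Type*) (K : Type*) [LieRing K] [LieAlgebra ℂ K] [Group Γ]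
    [DistribMulAction Γ K] : Submodule ℂ K :=
  Submodule.span ℂ {x : K | ∃ (g : Γ) (u : K), x = g • u - u}

section auxCov

variable {K : Type*} [LieRing K] {Γ : Type*} [Group Γ] [DistribMulAction Γ K]

private lemma jac3 (a b c : K) : ⁅⁅a, b⁆, c⁆ + ⁅⁅b, c⁆, a⁆ + ⁅⁅c, a⁆, b⁆ = 0 := by
  have h0 := lie_jacobi a b c
  have e1 : ⁅a, ⁅b, c⁆⁆ = -⁅⁅b, c⁆, a⁆ := (lie_skew _ _).symm
  have e2 : ⁅b, ⁅c, a⁆⁆ = -⁅⁅c, a⁆, b⁆ := (lie_skew _ _).symm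
  have e3 : ⁅c, ⁅a, b⁆⁆ = -⁅⁅a, b⁆, c⁆ := (lie_skew _ _).symm
  rw [e1, e2, e3] at h0
  calc ⁅⁅a, b⁆, c⁆ + ⁅⁅b, c⁆, a⁆ + ⁅⁅c, a⁆, b⁆
      = -(-⁅⁅b, c⁆, a⁆ + -⁅⁅c, a⁆, b⁆ + -⁅⁅a, b⁆, c⁆) := by abel
    _ = 0 := by rw [h0, neg_zero]

private lemma covBrk_smul_left (h : Γ) (u v : K) :
    covBrk Γ (h • u) v = covBrk Γ u v := by
  rw [covBrk, covBrk, finsum_congr (fun g : Γ => by rw [smul_smul] :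
    ∀ g : Γ, ⁅g • h • u, v⁆ = ⁅(g * h) • u, v⁆)]
  exact finsum_comp (g := fun x : Γ => ⁅x • u, v⁆) (fun g => g * h) (Equiv.mulRight h).bijective

variable (hbrk : ∀ (g : Γ) (u v : K), g • ⁅u, v⁆ = ⁅g • u, g • v⁆)
variable (hfin : ∀ u v : K, {g : Γ | ⁅g • u, v⁆ ≠ 0}.Finite)

include hbrk hfin in
private lemma smul_covBrk (h : Γ) (u v : K) :
    h • covBrk Γ u v = covBrk Γ u (h • v) := by
  rw [covBrk, show h • (∑ᶠ g : Γ, ⁅g • u, v⁆) = ∑ᶠ g : Γ, h • ⁅g • u, v⁆ from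
    (DistribMulAction.toAddMonoidHom K h).map_finsum (hfin u v)]
  have e : ∀ g : Γ, h • ⁅g • u, v⁆ = ⁅(h * g) • u, h • v⁆ :=
    fun g => by rw [hbrk, smul_smul]
  rw [finsum_congr e, covBrk]
  exact finsum_comp (g := fun x : Γ => ⁅x • u, h • v⁆) (fun g => h * g)
    (Equiv.mulLeft h).bijective

include hfin in
private lemma covBrk_add_left (u u' v : K) :
    covBrk Γ (u + u') v = covBrk Γ u v + covBrk Γ u' v := by
  rw [covBrk, covBrk, covBrk,
    finsum_congr (fun g : Γ => by rw [smul_add, add_lie] :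
      ∀ g : Γ, ⁅g • (u + u'), v⁆ = ⁅g • u, v⁆ + ⁅g • u', v⁆)]
  exact finsum_add_distrib (hfin u v) (hfin u' v)

include hfin in
private lemma covBrk_add_right (u v v' : K) :
    covBrk Γ u (v + v') = covBrk Γ u v + covBrk Γ u v' := by
  rw [covBrk, covBrk, covBrk,
    finsum_congr (fun g : Γ => by rw [lie_add] :
      ∀ g : Γ, ⁅g • u, v + v'⁆ = ⁅g • u, v⁆ + ⁅g • u, v'⁆)]
  exact finsum_add_distrib (hfin u v) (hfin u v')

include hbrk hfin in
private lemma P1fin (a b c : K) :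
    {p : Γ × Γ | ⁅⁅p.1 • a, p.2 • b⁆, c⁆ ≠ 0}.Finite := by
  apply ((hfin a b).biUnion
    (fun k _ => ((hfin ⁅k • a, b⁆ c).image (fun y => (y * k, y))))).subset
  rintro ⟨x, y⟩ hp
  have hinner : ⁅x • a, y • b⁆ = y • ⁅(y⁻¹ * x) • a, b⁆ := by
    rw [hbrk, smul_smul, mul_inv_cancel_left]
  have h1 : ⁅(y⁻¹ * x) • a, b⁆ ≠ 0 := by
    intro h0
    exact hp (by simp only [Set.mem_setOf_eq] at hp ⊢; rw [hinner, h0, smul_zero, zero_lie])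
  have h2 : ⁅y • ⁅(y⁻¹ * x) • a, b⁆, c⁆ ≠ 0 := by rw [← hinner]; exact hp
  exact Set.mem_biUnion h1 ⟨y, h2, by simp [mul_inv_cancel_left]⟩

include hfin in
private lemma P2fin (a b c : K) :
    {p : Γ × Γ | ⁅⁅p.1 • a, b⁆, p.2 • c⁆ ≠ 0}.Finite := by
  apply ((hfin a b).biUnion
    (fun g _ => ((hfin c ⁅g • a, b⁆).image (fun y => (g, y))))).subset
  rintro ⟨x, y⟩ hp
  have h1 : ⁅x • a, b⁆ ≠ 0 := by
    intro h0
    exact hp (by simp only [Set.mem_setOf_eq] at hp ⊢; rw [h0, zero_lie])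
  have h2 : ⁅y • c, ⁅x • a, b⁆⁆ ≠ 0 := by
    intro h0
    exact hp (by simp only [Set.mem_setOf_eq] at hp ⊢; rw [← lie_skew, h0, neg_zero])
  exact Set.mem_biUnion h1 ⟨y, h2, rfl⟩

include hfin in
private lemma P3fin (a b c : K) :
    {p : Γ × Γ | ⁅⁅b, p.2 • a⁆, p.1 • c⁆ ≠ 0}.Finite := by
  apply ((hfin a b).biUnion
    (fun h _ => ((hfin c ⁅b, h • a⁆).image (fun x => (x, h))))).subset
  rintro ⟨x, y⟩ hp
  have h1 : ⁅y • a, b⁆ ≠ 0 := by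
    intro h0
    apply hp
    simp only [Set.mem_setOf_eq] at hp ⊢
    rw [show ⁅b, y • a⁆ = -⁅y • a, b⁆ from (lie_skew _ _).symm, h0, neg_zero, zero_lie]
  have h2 : ⁅x • c, ⁅b, y • a⁆⁆ ≠ 0 := by
    intro h0
    exact hp (by simp only [Set.mem_setOf_eq] at hp ⊢; rw [← lie_skew, h0, neg_zero])
  exact Set.mem_biUnion h1 ⟨x, h2, rfl⟩

end auxCov

section auxCov2

variable {K : Type*} [LieRing K] [LieAlgebra ℂ K] {Γ : Type*} [Group Γ]
  [DistribMulAction Γ K] [SMulCommClass Γ ℂ K]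
variable (hfin : ∀ u v : K, {g : Γ | ⁅g • u, v⁆ ≠ 0}.Finite)

include hfin in
private lemma covBrk_csmul_left (c : ℂ) (u v : K) :
    covBrk Γ (c • u) v = c • covBrk Γ u v := by
  rw [covBrk, covBrk,
    finsum_congr (fun g : Γ => by rw [smul_comm g c u, smul_lie] :
      ∀ g : Γ, ⁅g • c • u, v⁆ = c • ⁅g • u, v⁆)]
  exact (smul_finsum' c (hfin u v)).symm

include hfin in
private lemma covBrk_csmul_right (c : ℂ) (u v : K) :
    covBrk Γ u (c • v) = c • covBrk Γ u v := by
  rw [covBrk, covBrk,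
    finsum_congr (fun g : Γ => by rw [lie_smul] :
      ∀ g : Γ, ⁅g • u, c • v⁆ = c • ⁅g • u, v⁆)]
  exact (smul_finsum' c (hfin u v)).symm

end auxCov2

theorem stmt3 {K : Type*} [LieRing K] [LieAlgebra ℂ K] (Γ : Type*) [Group Γ]
    -- Γ acts on K by ℂ-linear maps ...
    [DistribMulAction Γ K] [SMulCommClass Γ ℂ K]
    -- ... preserving the Lie bracket, i.e. by Lie algebra automorphisms
    (hbrk : ∀ (g : Γ) (u v : K), g • ⁅u, v⁆ = ⁅g • u, g • v⁆)
    -- finiteness hypothesis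
    (hfin : ∀ u v : K, {g : Γ | ⁅g • u, v⁆ ≠ 0}.Finite) :
    -- (i) `I_Γ` is a two-sided ideal for `[·,·]_Γ`
    (∀ x ∈ covIdeal Γ K, ∀ v : K, covBrk Γ x v ∈ covIdeal Γ K ∧
      covBrk Γ v x ∈ covIdeal Γ K) ∧
    -- (ii) skew symmetry modulo `I_Γ`
    (∀ u v : K, covBrk Γ u v + covBrk Γ v u ∈ covIdeal Γ K) ∧
    -- (iii) the Jacobi identity modulo `I_Γ`
    (∀ u v w : K,
      covBrk Γ (covBrk Γ u v) w + covBrk Γ (covBrk Γ v w) u + covBrk Γ (covBrk Γ w u) v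
        ∈ covIdeal Γ K) ∧
    -- in particular, the induced operation on the quotient `K/I_Γ` is a Lie bracket
    (∃ b : (K ⧸ covIdeal Γ K) → (K ⧸ covIdeal Γ K) → (K ⧸ covIdeal Γ K),
      (∀ u v : K, b (Submodule.Quotient.mk u) (Submodule.Quotient.mk v) =
        Submodule.Quotient.mk (covBrk Γ u v)) ∧
      (∀ x, b x x = 0) ∧
      (∀ x y z, b (b x y) z + b (b y z) x + b (b z x) y = 0)) := by
  classical
  let qh : K →+ K ⧸ covIdeal Γ K := (covIdeal Γ K).mkQ.toAddMonoidHom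
  have qmk : ∀ x : K, qh x = Submodule.Quotient.mk x := fun _ => rfl
  have qsmul : ∀ (g : Γ) (x : K), qh (g • x) = qh x := fun g x => by
    rw [qmk, qmk]
    exact (Submodule.Quotient.eq _).2 (Submodule.subset_span ⟨g, x, rfl⟩)
  have qne : ∀ x : K, qh x ≠ 0 → x ≠ 0 := fun x hx h0 => hx (by rw [h0, map_zero])
  -- the bilinear map
  let Bl : K →ₗ[ℂ] K →ₗ[ℂ] K := LinearMap.mk₂ ℂ (covBrk Γ) (covBrk_add_left hfin)
    (covBrk_csmul_left hfin) (covBrk_add_right hfin) (covBrk_csmul_right hfin)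
  have hBlapp : ∀ u v : K, Bl u v = covBrk Γ u v := fun u v => rfl
  -- (i)
  have hleft : ∀ (v x : K), x ∈ covIdeal Γ K → covBrk Γ x v = 0 := by
    intro v x hx
    have hle : covIdeal Γ K ≤ LinearMap.ker (Bl.flip v) := by
      apply Submodule.span_le.2
      rintro _ ⟨g, u, rfl⟩
      simp only [SetLike.mem_coe, LinearMap.mem_ker, map_sub, LinearMap.flip_apply]
      rw [hBlapp, hBlapp, covBrk_smul_left, sub_self]
    have hker := hle hx
    rw [LinearMap.mem_ker, LinearMap.flip_apply, hBlapp] at hker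
    exact hker
  have hright : ∀ (v x : K), x ∈ covIdeal Γ K → covBrk Γ v x ∈ covIdeal Γ K := by
    intro v x hx
    have hle : covIdeal Γ K ≤ Submodule.comap (Bl v) (covIdeal Γ K) := by
      apply Submodule.span_le.2
      rintro _ ⟨g, u, rfl⟩
      simp only [SetLike.mem_coe, Submodule.mem_comap, map_sub]
      rw [hBlapp, hBlapp, ← smul_covBrk hbrk hfin g v u]
      exact Submodule.subset_span ⟨g, covBrk Γ v u, rfl⟩
    exact hle hx
  -- (ii)
  have hii : ∀ u v : K, covBrk Γ u v + covBrk Γ v u ∈ covIdeal Γ K := by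
    intro u v
    rw [← Submodule.Quotient.mk_eq_zero (covIdeal Γ K), ← qmk, map_add]
    have key2 : qh (covBrk Γ v u) = -qh (covBrk Γ u v) := by
      rw [covBrk, qh.map_finsum (hfin v u)]
      have p : ∀ g : Γ, qh ⁅g • v, u⁆ = -qh ⁅g⁻¹ • u, v⁆ := by
        intro g
        rw [← qsmul g⁻¹ ⁅g • v, u⁆, show g⁻¹ • ⁅g • v, u⁆ = -⁅g⁻¹ • u, v⁆ by
          rw [hbrk, inv_smul_smul, ← lie_skew], map_neg]
      rw [finsum_congr p, finsum_neg_distrib,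
        show (∑ᶠ g : Γ, qh ⁅g⁻¹ • u, v⁆) = ∑ᶠ g : Γ, qh ⁅g • u, v⁆ from
          finsum_comp (g := fun x : Γ => qh ⁅x • u, v⁆) (fun g : Γ => g⁻¹)
            (Equiv.inv Γ).bijective,
        covBrk, qh.map_finsum (hfin u v)]
    rw [key2, add_neg_cancel]
  -- the key double-sum formula
  have qBB : ∀ u v w : K, qh (covBrk Γ (covBrk Γ u v) w) =
      ∑ᶠ g : Γ, ∑ᶠ h : Γ, qh ⁅⁅h • u, g • v⁆, w⁆ := by
    intro u v w
    rw [covBrk, qh.map_finsum (hfin (covBrk Γ u v) w)]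
    refine finsum_congr fun g => ?_
    rw [smul_covBrk hbrk hfin g u v, covBrk,
      show ⁅∑ᶠ h : Γ, ⁅h • u, g • v⁆, w⁆ = ∑ᶠ h : Γ, ⁅⁅h • u, g • v⁆, w⁆ from
        (AddMonoidHom.mk' (fun x : K => ⁅x, w⁆) (fun a b => add_lie a b w)).map_finsum
          (hfin u (g • v))]
    exact qh.map_finsum ((hfin u (g • v)).subset fun h hh h0 => hh (by simp only [h0, zero_lie]))
  -- (iii)
  have hiii : ∀ u v w : K, covBrk Γ (covBrk Γ u v) w + covBrk Γ (covBrk Γ v w) u +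
      covBrk Γ (covBrk Γ w u) v ∈ covIdeal Γ K := by
    intro u v w
    rw [← Submodule.Quotient.mk_eq_zero (covIdeal Γ K), ← qmk, map_add, map_add]
    rw [qBB u v w, qBB v w u, qBB w u v]
    have injE : Function.Injective (fun p : Γ × Γ => (p.2 * p.1, p.2)) := by
      intro p q hpq
      replace hpq : (p.2 * p.1, p.2) = (q.2 * q.1, q.2) := hpq
      rw [Prod.mk.injEq] at hpq
      obtain ⟨h1, h2⟩ := hpq
      rw [h2] at h1
      exact Prod.ext (mul_left_cancel h1) h2
    have hA : (∑ᶠ g : Γ, ∑ᶠ h : Γ, qh ⁅⁅g • v, w⁆, h • u⁆) =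
        ∑ᶠ g : Γ, ∑ᶠ h : Γ, qh ⁅⁅h • v, g • w⁆, u⁆ := by
      have p1 : ∀ g h : Γ, qh ⁅⁅g • v, w⁆, h • u⁆ = qh ⁅⁅(h⁻¹ * g) • v, h⁻¹ • w⁆, u⁆ := by
        intro g h
        rw [← qsmul h⁻¹ ⁅⁅g • v, w⁆, h • u⁆]
        exact congrArg qh (by rw [hbrk, hbrk, smul_smul, inv_smul_smul])
      calc (∑ᶠ g : Γ, ∑ᶠ h : Γ, qh ⁅⁅g • v, w⁆, h • u⁆)
          = ∑ᶠ g : Γ, ∑ᶠ h : Γ, qh ⁅⁅(h⁻¹ * g) • v, h⁻¹ • w⁆, u⁆ :=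
            finsum_congr fun g => finsum_congr fun h => p1 g h
        _ = ∑ᶠ g : Γ, ∑ᶠ h : Γ, qh ⁅⁅(h * g) • v, h • w⁆, u⁆ :=
            finsum_congr fun g =>
              finsum_comp (g := fun h : Γ => qh ⁅⁅(h * g) • v, h • w⁆, u⁆)
                (fun h : Γ => h⁻¹) (Equiv.inv Γ).bijective
        _ = ∑ᶠ h : Γ, ∑ᶠ g : Γ, qh ⁅⁅(h * g) • v, h • w⁆, u⁆ := by
            apply aux_swap
            refine ((P1fin hbrk hfin v w u).preimage injE.injOn).subset ?_
            intro p hp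
            simp only [Set.mem_preimage, Set.mem_setOf_eq]
            exact qne _ hp
        _ = ∑ᶠ h : Γ, ∑ᶠ g : Γ, qh ⁅⁅g • v, h • w⁆, u⁆ :=
            finsum_congr fun h =>
              finsum_comp (g := fun x : Γ => qh ⁅⁅x • v, h • w⁆, u⁆)
                (fun g : Γ => h * g) (Equiv.mulLeft h).bijective
    have hB : (∑ᶠ g : Γ, ∑ᶠ h : Γ, qh ⁅⁅w, h • u⁆, g • v⁆) =
        ∑ᶠ g : Γ, ∑ᶠ h : Γ, qh ⁅⁅h • w, g • u⁆, v⁆ := by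
      have p1 : ∀ g h : Γ, qh ⁅⁅w, h • u⁆, g • v⁆ = qh ⁅⁅g⁻¹ • w, (g⁻¹ * h) • u⁆, v⁆ := by
        intro g h
        rw [← qsmul g⁻¹ ⁅⁅w, h • u⁆, g • v⁆]
        exact congrArg qh (by rw [hbrk, hbrk, smul_smul, inv_smul_smul])
      calc (∑ᶠ g : Γ, ∑ᶠ h : Γ, qh ⁅⁅w, h • u⁆, g • v⁆)
          = ∑ᶠ g : Γ, ∑ᶠ h : Γ, qh ⁅⁅g⁻¹ • w, (g⁻¹ * h) • u⁆, v⁆ :=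
            finsum_congr fun g => finsum_congr fun h => p1 g h
        _ = ∑ᶠ g : Γ, ∑ᶠ h : Γ, qh ⁅⁅g⁻¹ • w, h • u⁆, v⁆ :=
            finsum_congr fun g =>
              finsum_comp (g := fun h : Γ => qh ⁅⁅g⁻¹ • w, h • u⁆, v⁆)
                (fun h : Γ => g⁻¹ * h) (Equiv.mulLeft g⁻¹).bijective
        _ = ∑ᶠ g : Γ, ∑ᶠ h : Γ, qh ⁅⁅g • w, h • u⁆, v⁆ :=
            finsum_comp (g := fun x : Γ => ∑ᶠ h : Γ, qh ⁅⁅x • w, h • u⁆, v⁆)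
              (fun g : Γ => g⁻¹) (Equiv.inv Γ).bijective
        _ = ∑ᶠ h : Γ, ∑ᶠ g : Γ, qh ⁅⁅g • w, h • u⁆, v⁆ := by
            apply aux_swap
            exact (P1fin hbrk hfin w u v).subset (fun p hp => qne _ hp)
    have jacq : ∀ g h : Γ, qh ⁅⁅h • u, g • v⁆, w⁆ =
        -qh ⁅⁅g • v, w⁆, h • u⁆ + -qh ⁅⁅w, h • u⁆, g • v⁆ := by
      intro g h
      have h0 := jac3 (h • u) (g • v) w
      have h1 : ⁅⁅h • u, g • v⁆, w⁆ = -⁅⁅g • v, w⁆, h • u⁆ + -⁅⁅w, h • u⁆, g • v⁆ := by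
        have e : ⁅⁅h • u, g • v⁆, w⁆ =
            (⁅⁅h • u, g • v⁆, w⁆ + ⁅⁅g • v, w⁆, h • u⁆ + ⁅⁅w, h • u⁆, g • v⁆)
            + (-⁅⁅g • v, w⁆, h • u⁆ + -⁅⁅w, h • u⁆, g • v⁆) := by abel
        rw [e, h0, zero_add]
      rw [h1, map_add, map_neg, map_neg]
    rw [finsum_congr (fun g => finsum_congr fun h => jacq g h)]
    have finA : {p : Γ × Γ | -qh ⁅⁅p.1 • v, w⁆, p.2 • u⁆ ≠ 0}.Finite :=
      (P2fin hfin v w u).subset (fun p hp => qne _ (fun h0 => hp (by rw [h0, neg_zero])))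
    have finC : {p : Γ × Γ | -qh ⁅⁅w, p.2 • u⁆, p.1 • v⁆ ≠ 0}.Finite :=
      (P3fin hfin u w v).subset (fun p hp => qne _ (fun h0 => hp (by rw [h0, neg_zero])))
    rw [aux_add _ _ finA finC, aux_neg, aux_neg, hA, hB]
    abel
  -- quotient bracket
  let M2 : K →ₗ[ℂ] K →ₗ[ℂ] (K ⧸ covIdeal Γ K) := Bl.compr₂ (covIdeal Γ K).mkQ
  have hM2 : ∀ u v : K, M2 u v = Submodule.Quotient.mk (covBrk Γ u v) := fun u v => rfl
  have h1 : covIdeal Γ K ≤ LinearMap.ker M2 := by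
    intro x hx
    rw [LinearMap.mem_ker]
    apply LinearMap.ext
    intro v
    show M2 x v = 0
    rw [hM2, hleft v x hx]
    exact (Submodule.Quotient.mk_eq_zero _).2 (Submodule.zero_mem _)
  let Φ := (covIdeal Γ K).liftQ M2 h1
  have hΦ : ∀ u : K, Φ (Submodule.Quotient.mk u) = M2 u := fun u =>
    Submodule.liftQ_apply _ _ _
  have h2 : ∀ t : K ⧸ covIdeal Γ K, covIdeal Γ K ≤ LinearMap.ker (Φ t) := by
    intro t
    obtain ⟨u, rfl⟩ := Submodule.Quotient.mk_surjective _ t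
    intro x hx
    rw [LinearMap.mem_ker, hΦ, hM2]
    exact (Submodule.Quotient.mk_eq_zero _).2 (hright u x hx)
  let b : (K ⧸ covIdeal Γ K) → (K ⧸ covIdeal Γ K) → (K ⧸ covIdeal Γ K) :=
    fun t s => (covIdeal Γ K).liftQ (Φ t) (h2 t) s
  have hb1 : ∀ u v : K, b (Submodule.Quotient.mk u) (Submodule.Quotient.mk v) =
      Submodule.Quotient.mk (covBrk Γ u v) := by
    intro u v
    show (covIdeal Γ K).liftQ (Φ (Submodule.Quotient.mk u)) _ (Submodule.Quotient.mk v) = _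
    rw [Submodule.liftQ_apply, hΦ, hM2]
  have hmem_self : ∀ u : K, covBrk Γ u u ∈ covIdeal Γ K := by
    intro u
    have e : covBrk Γ u u = (2⁻¹ : ℂ) • (covBrk Γ u u + covBrk Γ u u) := by
      rw [← two_smul ℂ (covBrk Γ u u), smul_smul]
      norm_num
    rw [e]
    exact Submodule.smul_mem _ _ (hii u u)
  refine ⟨fun x hx v => ⟨by rw [hleft v x hx]; exact Submodule.zero_mem _, hright v x hx⟩,
    hii, hiii, ⟨b, hb1, ?_, ?_⟩⟩
  · intro x
    obtain ⟨u, rfl⟩ := Submodule.Quotient.mk_surjective _ x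
    rw [hb1]
    exact (Submodule.Quotient.mk_eq_zero _).2 (hmem_self u)
  · intro x y z
    obtain ⟨u, rfl⟩ := Submodule.Quotient.mk_surjective _ x
    obtain ⟨v, rfl⟩ := Submodule.Quotient.mk_surjective _ y
    obtain ⟨w, rfl⟩ := Submodule.Quotient.mk_surjective _ z
    rw [hb1, hb1, hb1, hb1, hb1, hb1, ← Submodule.Quotient.mk_add, ← Submodule.Quotient.mk_add]
    exact (Submodule.Quotient.mk_eq_zero _).2 (hiii u v w)
end

section
/- Let K be a complex Lie algebra equipped with a symmetric invariant bilinear form ⟨·,·⟩ (so ⟨[u,v],w⟩ = ⟨u,[v,w]⟩), and let Γ be a group acting on K by Lie algebra automorphisms preserving ⟨·,·⟩ (i.e., ⟨g·u, g·v⟩ = ⟨u,v⟩), such that for every u, v ∈ K both sets {g ∈ Γ : [g·u, v] ≠ 0} and {g ∈ Γ : ⟨g·u, v⟩ ≠ 0} are finite. Define [u,v]_Γ = ∑_{g∈Γ} [g·u, v], ⟨u,v⟩_Γ = ∑_{g∈Γ} ⟨g·u, v⟩, and I_Γ = span_ℂ{g·u − u : g ∈ Γ, u ∈ K}. Then ⟨·,·⟩_Γ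 is symmetric; ⟨x, v⟩_Γ = 0 for every x ∈ I_Γ and v ∈ K; and ⟨[u,v]_Γ, w⟩_Γ = ⟨u, [v,w]_Γ⟩_Γ for all u, v, w ∈ K. Hence ⟨·,·⟩_Γ descends to a symmetric invariant bilinear form on the quotient Lie algebra K/I_Γ. -/
/-- The covariant form `⟨u,v⟩_Γ = ∑_{g∈Γ} ⟨g·u, v⟩`. -/
noncomputable def covForm (Γ : Type*) {K : Type*} [AddCommGroup K] [Module ℂ K] [Group Γ]
    [DistribMulAction Γ K] (B : K →ₗ[ℂ] K →ₗ[ℂ] ℂ) (u v : K) : ℂ :=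
  ∑ᶠ g : Γ, B (g • u) v

theorem stmt4 {K : Type*} [LieRing K] [LieAlgebra ℂ K] (Γ : Type*) [Group Γ]
    -- Γ acts on K by ℂ-linear maps ...
    [DistribMulAction Γ K] [SMulCommClass Γ ℂ K]
    -- ... preserving the Lie bracket, i.e. by Lie algebra automorphisms
    (hbrk : ∀ (g : Γ) (u v : K), g • ⁅u, v⁆ = ⁅g • u, g • v⁆)
    -- a symmetric invariant bilinear form, preserved by Γ
    (B : K →ₗ[ℂ] K →ₗ[ℂ] ℂ)
    (hsymm : ∀ u v : K, B u v = B v u)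
    (hinv : ∀ u v w : K, B ⁅u, v⁆ w = B u ⁅v, w⁆)
    (hΓ : ∀ (g : Γ) (u v : K), B (g • u) (g • v) = B u v)
    -- finiteness hypotheses
    (hfin : ∀ u v : K, {g : Γ | ⁅g • u, v⁆ ≠ 0}.Finite)
    (hfin' : ∀ u v : K, {g : Γ | B (g • u) v ≠ 0}.Finite) :
    -- `⟨·,·⟩_Γ` is symmetric
    (∀ u v : K, covForm Γ B u v = covForm Γ B v u) ∧
    -- `⟨·,·⟩_Γ` vanishes on `I_Γ`
    (∀ x ∈ covIdeal Γ K, ∀ v : K, covForm Γ B x v = 0) ∧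
    -- `⟨·,·⟩_Γ` is invariant with respect to `[·,·]_Γ`
    (∀ u v w : K, covForm Γ B (covBrk Γ u v) w = covForm Γ B u (covBrk Γ v w)) ∧
    -- hence it descends to a symmetric invariant bilinear form on the quotient `K/I_Γ`
    (∃ B' : (K ⧸ covIdeal Γ K) → (K ⧸ covIdeal Γ K) → ℂ,
      (∀ u v : K, B' (Submodule.Quotient.mk u) (Submodule.Quotient.mk v) = covForm Γ B u v) ∧
      (∀ x y, B' x y = B' y x) ∧
      (∃ b : (K ⧸ covIdeal Γ K) → (K ⧸ covIdeal Γ K) → (K ⧸ covIdeal Γ K),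
        (∀ u v : K, b (Submodule.Quotient.mk u) (Submodule.Quotient.mk v) =
          Submodule.Quotient.mk (covBrk Γ u v)) ∧
        ∀ x y z, B' (b x y) z = B' x (b y z))) := by
  classical
  -- reindexing in the first slot of `covForm`
  have hg1 : ∀ (g₀ : Γ) (u v : K), covForm Γ B (g₀ • u) v = covForm Γ B u v := by
    intro g₀ u v
    exact finsum_eq_of_bijective (· * g₀) (Group.mulRight_bijective g₀)
      (fun g => by rw [← mul_smul])
  have hFsub : ∀ u u' v : K, covForm Γ B (u - u') v = covForm Γ B u v - covForm Γ B u' v := by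
    intro u u' v
    rw [covForm, covForm, covForm, ← finsum_sub_distrib (hfin' u v) (hfin' u' v)]
    exact finsum_congr fun g => by rw [smul_sub, map_sub, LinearMap.sub_apply]
  have hFadd : ∀ u u' v : K, covForm Γ B (u + u') v = covForm Γ B u v + covForm Γ B u' v := by
    intro u u' v
    rw [covForm, covForm, covForm, ← finsum_add_distrib (hfin' u v) (hfin' u' v)]
    exact finsum_congr fun g => by rw [smul_add, map_add, LinearMap.add_apply]
  have hFsmul : ∀ (c : ℂ) (u v : K), covForm Γ B (c • u) v = c * covForm Γ B u v := by
    intro c u v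
    rw [covForm, covForm, ← smul_eq_mul, smul_finsum' c (hfin' u v)]
    exact finsum_congr fun g => by
      rw [smul_comm, map_smul, LinearMap.smul_apply, smul_eq_mul]
  -- symmetry
  have hFsymm : ∀ u v : K, covForm Γ B u v = covForm Γ B v u := by
    intro u v
    refine finsum_eq_of_bijective (fun g : Γ => g⁻¹) inv_involutive.bijective fun g => ?_
    have h1 := hΓ g⁻¹ (g • u) v
    rw [inv_smul_smul] at h1
    rw [← h1, hsymm]
  -- vanishing on the ideal
  have hIdeal : ∀ x ∈ covIdeal Γ K, ∀ v : K, covForm Γ B x v = 0 := by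
    intro x hx v
    induction hx using Submodule.span_induction with
    | mem x hx => obtain ⟨g, u, rfl⟩ := hx; rw [hFsub, hg1, sub_self]
    | zero =>
      rw [covForm]
      simp only [smul_zero, map_zero, LinearMap.zero_apply]
      exact finsum_zero
    | add x y hx hy ihx ihy => rw [hFadd, ihx, ihy, add_zero]
    | smul c x hx ih => rw [hFsmul, ih, mul_zero]
  -- properties of covBrk
  have kb1 : ∀ (g₀ : Γ) (u v : K), covBrk Γ (g₀ • u) v = covBrk Γ u v := by
    intro g₀ u v
    exact finsum_eq_of_bijective (· * g₀) (Group.mulRight_bijective g₀)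
      (fun g => by rw [← mul_smul])
  have kbsub : ∀ u u' v : K, covBrk Γ (u - u') v = covBrk Γ u v - covBrk Γ u' v := by
    intro u u' v
    rw [covBrk, covBrk, covBrk, ← finsum_sub_distrib (hfin u v) (hfin u' v)]
    exact finsum_congr fun g => by rw [smul_sub, sub_lie]
  have kbadd : ∀ u u' v : K, covBrk Γ (u + u') v = covBrk Γ u v + covBrk Γ u' v := by
    intro u u' v
    rw [covBrk, covBrk, covBrk, ← finsum_add_distrib (hfin u v) (hfin u' v)]
    exact finsum_congr fun g => by rw [smul_add, add_lie]
  have kbsmul : ∀ (c : ℂ) (u v : K), covBrk Γ (c • u) v = c • covBrk Γ u v := by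
    intro c u v
    rw [covBrk, covBrk, smul_finsum' c (hfin u v)]
    exact finsum_congr fun g => by rw [smul_comm, smul_lie]
  have kbI1 : ∀ v : K, ∀ x ∈ covIdeal Γ K, covBrk Γ x v = 0 := by
    intro v x hx
    induction hx using Submodule.span_induction with
    | mem x hx => obtain ⟨g, u, rfl⟩ := hx; rw [kbsub, kb1, sub_self]
    | zero =>
      rw [covBrk]
      simp only [smul_zero, zero_lie]
      exact finsum_zero
    | add x y hx hy ihx ihy => rw [kbadd, ihx, ihy, add_zero]
    | smul c x hx ih => rw [kbsmul, ih, smul_zero]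
  have kbadd2 : ∀ u v v' : K, covBrk Γ u (v + v') = covBrk Γ u v + covBrk Γ u v' := by
    intro u v v'
    rw [covBrk, covBrk, covBrk, ← finsum_add_distrib (hfin u v) (hfin u v')]
    exact finsum_congr fun g => by rw [lie_add]
  have kbsub2 : ∀ u v v' : K, covBrk Γ u (v - v') = covBrk Γ u v - covBrk Γ u v' := by
    intro u v v'
    rw [covBrk, covBrk, covBrk, ← finsum_sub_distrib (hfin u v) (hfin u v')]
    exact finsum_congr fun g => by rw [lie_sub]
  have kbsmul2 : ∀ (c : ℂ) (u v : K), covBrk Γ u (c • v) = c • covBrk Γ u v := by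
    intro c u v
    rw [covBrk, covBrk, smul_finsum' c (hfin u v)]
    exact finsum_congr fun g => by rw [lie_smul]
  have kb2 : ∀ (g₀ : Γ) (u v : K), covBrk Γ u (g₀ • v) = g₀ • covBrk Γ u v := by
    intro g₀ u v
    have e0 : g₀ • (∑ᶠ g : Γ, ⁅g • u, v⁆) = ∑ᶠ g : Γ, g₀ • ⁅g • u, v⁆ :=
      AddMonoidHom.map_finsum (DistribMulAction.toAddMonoidHom K g₀) (hfin u v)
    rw [covBrk, covBrk, e0]
    refine (finsum_eq_of_bijective (fun g : Γ => g₀ * g) (Group.mulLeft_bijective g₀)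
      fun g => ?_).symm
    show g₀ • ⁅g • u, v⁆ = ⁅(g₀ * g) • u, g₀ • v⁆
    rw [hbrk, mul_smul]
  have kbI2 : ∀ u : K, ∀ y ∈ covIdeal Γ K, covBrk Γ u y ∈ covIdeal Γ K := by
    intro u y hy
    induction hy using Submodule.span_induction with
    | mem y hy =>
      obtain ⟨g, w, rfl⟩ := hy
      rw [kbsub2, kb2]
      exact Submodule.subset_span ⟨g, covBrk Γ u w, rfl⟩
    | zero =>
      have h0 : covBrk Γ u (0 : K) = 0 := by
        rw [covBrk]; simp only [lie_zero]; exact finsum_zero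
      rw [h0]; exact Submodule.zero_mem _
    | add x y hx hy ihx ihy => rw [kbadd2]; exact Submodule.add_mem _ ihx ihy
    | smul c x hx ih => rw [kbsmul2]; exact Submodule.smul_mem _ _ ih
  -- congruence of covForm modulo the ideal
  have hFcongr : ∀ u u' v v' : K, u' - u ∈ covIdeal Γ K → v' - v ∈ covIdeal Γ K →
      covForm Γ B u' v' = covForm Γ B u v := by
    intro u u' v v' hu hv
    have e1 : covForm Γ B u' v' = covForm Γ B u v' := by
      have h := hFsub u' u v'
      rw [hIdeal _ hu v'] at h
      exact (sub_eq_zero.mp h.symm)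
    have e2 : covForm Γ B v' u = covForm Γ B v u := by
      have h := hFsub v' v u
      rw [hIdeal _ hv u] at h
      exact (sub_eq_zero.mp h.symm)
    rw [e1, hFsymm, e2, hFsymm]
  -- invariance
  have hInv : ∀ u v w : K, covForm Γ B (covBrk Γ u v) w = covForm Γ B u (covBrk Γ v w) := by
    intro u v w
    set F : Γ → Γ → ℂ := fun g h => B (g • u) ⁅h • v, w⁆ with hF
    -- L: each term of the LHS is an inner finsum
    have hterm : ∀ h : Γ, B (h • covBrk Γ u v) w = ∑ᶠ g : Γ, F g h := by
      intro h
      have hs : (Function.support fun g : Γ => ⁅(h * g) • u, h • v⁆).Finite := by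
        have : (Function.support fun g : Γ => ⁅(h * g) • u, h • v⁆)
            ⊆ (fun g : Γ => h * g) ⁻¹' {g : Γ | ⁅g • u, h • v⁆ ≠ 0} := fun g hg => hg
        exact ((hfin u (h • v)).preimage (mul_right_injective h).injOn).subset this
      have e0 : h • (∑ᶠ g : Γ, ⁅g • u, v⁆) = ∑ᶠ g : Γ, h • ⁅g • u, v⁆ :=
        AddMonoidHom.map_finsum (DistribMulAction.toAddMonoidHom K h) (hfin u v)
      have e1 : h • covBrk Γ u v = ∑ᶠ g : Γ, ⁅(h * g) • u, h • v⁆ := by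
        rw [covBrk, e0]
        exact finsum_congr fun g => by rw [hbrk, mul_smul]
      have e1' : B (∑ᶠ g : Γ, ⁅(h * g) • u, h • v⁆) w
          = ∑ᶠ g : Γ, B ⁅(h * g) • u, h • v⁆ w :=
        AddMonoidHom.map_finsum (B.flip w).toAddMonoidHom hs
      rw [e1, e1']
      have e2 : ∀ g : Γ, B ⁅(h * g) • u, h • v⁆ w = B ((h * g) • u) ⁅h • v, w⁆ :=
        fun g => hinv _ _ _
      calc (∑ᶠ g : Γ, B ⁅(h * g) • u, h • v⁆ w)
          = ∑ᶠ g : Γ, B ((h * g) • u) ⁅h • v, w⁆ := finsum_congr e2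
        _ = ∑ᶠ g : Γ, F g h :=
            finsum_eq_of_bijective (fun g : Γ => h * g) (Group.mulLeft_bijective h)
              (fun g => rfl)
    have hL : covForm Γ B (covBrk Γ u v) w = ∑ᶠ h : Γ, ∑ᶠ g : Γ, F g h :=
      finsum_congr hterm
    have hR : covForm Γ B u (covBrk Γ v w) = ∑ᶠ g : Γ, ∑ᶠ h : Γ, F g h := by
      refine finsum_congr fun g => ?_
      have e0 : B (g • u) (∑ᶠ h : Γ, ⁅h • v, w⁆) = ∑ᶠ h : Γ, B (g • u) ⁅h • v, w⁆ :=
        AddMonoidHom.map_finsum (B (g • u)).toAddMonoidHom (hfin v w)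
      rw [covBrk, e0]
    -- now exchange the two finsums
    set S : Finset Γ := (hfin v w).toFinset with hS
    set T : Finset Γ := S.biUnion (fun h => (hfin' u ⁅h • v, w⁆).toFinset) with hT
    have hmem : ∀ g h : Γ, F g h ≠ 0 → h ∈ S ∧ g ∈ T := by
      intro g h hgh
      have hhS : h ∈ S := by
        rw [hS, Set.Finite.mem_toFinset]
        intro hzero
        exact hgh (by rw [hF]; simp only []; rw [hzero, map_zero])
      refine ⟨hhS, ?_⟩
      rw [hT]
      exact Finset.mem_biUnion.mpr ⟨h, hhS, (hfin' u ⁅h • v, w⁆).mem_toFinset.mpr hgh⟩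
    have eL : (∑ᶠ h : Γ, ∑ᶠ g : Γ, F g h) = ∑ h ∈ S, ∑ g ∈ T, F g h := by
      rw [finsum_eq_finset_sum_of_support_subset _ (s := S) (fun h hh => by
        rw [Finset.mem_coe]
        by_contra hhS
        apply hh
        refine finsum_eq_zero_of_forall_eq_zero fun g => ?_
        by_contra hgz
        exact hhS (hmem g h hgz).1)]
      refine Finset.sum_congr rfl fun h hh => ?_
      exact finsum_eq_finset_sum_of_support_subset _ (fun g hg => by
        rw [Finset.mem_coe]
        exact (hmem g h hg).2)
    have eR : (∑ᶠ g : Γ, ∑ᶠ h : Γ, F g h) = ∑ g ∈ T, ∑ h ∈ S, F g h := by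
      rw [finsum_eq_finset_sum_of_support_subset _ (s := T) (fun g hg => by
        rw [Finset.mem_coe]
        by_contra hgT
        apply hg
        refine finsum_eq_zero_of_forall_eq_zero fun h => ?_
        by_contra hgz
        exact hgT (hmem g h hgz).2)]
      refine Finset.sum_congr rfl fun g hg => ?_
      exact finsum_eq_finset_sum_of_support_subset _ (fun h hh => by
        rw [Finset.mem_coe]
        exact (hmem g h hh).1)
    rw [hL, hR, eL, eR, Finset.sum_comm]
  refine ⟨hFsymm, hIdeal, hInv, ?_⟩
  -- descending to the quotient
  have hmkout : ∀ x : K ⧸ covIdeal Γ K, Submodule.Quotient.mk x.out = x :=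
    fun x => Quotient.out_eq' x
  have hdiff : ∀ u : K, ((Submodule.Quotient.mk u : K ⧸ covIdeal Γ K)).out - u ∈ covIdeal Γ K :=
    fun u => (Submodule.Quotient.eq _).mp (hmkout (Submodule.Quotient.mk u))
  refine ⟨fun x y => covForm Γ B x.out y.out, ?_, ?_, ?_⟩
  · intro u v
    exact hFcongr u _ v _ (hdiff u) (hdiff v)
  · intro x y
    exact hFsymm _ _
  · refine ⟨fun x y => Submodule.Quotient.mk (covBrk Γ x.out y.out), ?_, ?_⟩
    · intro u v
      rw [Submodule.Quotient.eq]
      have e1 : covBrk Γ ((Submodule.Quotient.mk u : K ⧸ covIdeal Γ K)).out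
            ((Submodule.Quotient.mk v : K ⧸ covIdeal Γ K)).out - covBrk Γ u v
          = covBrk Γ (((Submodule.Quotient.mk u : K ⧸ covIdeal Γ K)).out - u)
              ((Submodule.Quotient.mk v : K ⧸ covIdeal Γ K)).out
            + covBrk Γ u (((Submodule.Quotient.mk v : K ⧸ covIdeal Γ K)).out - v) := by
        rw [kbsub, kbsub2]; abel
      rw [e1, kbI1 _ _ (hdiff u), zero_add]
      exact kbI2 u _ (hdiff v)
    · intro x y z
      obtain ⟨u, rfl⟩ := Submodule.Quotient.mk_surjective _ x
      obtain ⟨v, rfl⟩ := Submodule.Quotient.mk_surjective _ y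
      obtain ⟨w, rfl⟩ := Submodule.Quotient.mk_surjective _ z
      have hb : ∀ a c : K, covBrk Γ ((Submodule.Quotient.mk a : K ⧸ covIdeal Γ K)).out
          ((Submodule.Quotient.mk c : K ⧸ covIdeal Γ K)).out - covBrk Γ a c ∈ covIdeal Γ K := by
        intro a c
        have e1 : covBrk Γ ((Submodule.Quotient.mk a : K ⧸ covIdeal Γ K)).out
              ((Submodule.Quotient.mk c : K ⧸ covIdeal Γ K)).out - covBrk Γ a c
            = covBrk Γ (((Submodule.Quotient.mk a : K ⧸ covIdeal Γ K)).out - a)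
                ((Submodule.Quotient.mk c : K ⧸ covIdeal Γ K)).out
              + covBrk Γ a (((Submodule.Quotient.mk c : K ⧸ covIdeal Γ K)).out - c) := by
          rw [kbsub, kbsub2]; abel
        rw [e1, kbI1 _ _ (hdiff a), zero_add]
        exact kbI2 a _ (hdiff c)
      calc covForm Γ B ((Submodule.Quotient.mk (covBrk Γ
              ((Submodule.Quotient.mk u : K ⧸ covIdeal Γ K)).out
              ((Submodule.Quotient.mk v : K ⧸ covIdeal Γ K)).out) : K ⧸ covIdeal Γ K)).out
            ((Submodule.Quotient.mk w : K ⧸ covIdeal Γ K)).out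
          = covForm Γ B (covBrk Γ u v) w := by
            refine hFcongr _ _ _ _ ?_ (hdiff w)
            have h1 := hdiff (covBrk Γ ((Submodule.Quotient.mk u : K ⧸ covIdeal Γ K)).out
              ((Submodule.Quotient.mk v : K ⧸ covIdeal Γ K)).out)
            have h2 := hb u v
            have := Submodule.add_mem (covIdeal Γ K) h1 h2
            convert this using 1
            abel
        _ = covForm Γ B u (covBrk Γ v w) := hInv u v w
        _ = covForm Γ B ((Submodule.Quotient.mk u : K ⧸ covIdeal Γ K)).out
            ((Submodule.Quotient.mk (covBrk Γ
              ((Submodule.Quotient.mk v : K ⧸ covIdeal Γ K)).out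
              ((Submodule.Quotient.mk w : K ⧸ covIdeal Γ K)).out) : K ⧸ covIdeal Γ K)).out := by
            refine (hFcongr _ _ _ _ (hdiff u) ?_).symm
            have h1 := hdiff (covBrk Γ ((Submodule.Quotient.mk v : K ⧸ covIdeal Γ K)).out
              ((Submodule.Quotient.mk w : K ⧸ covIdeal Γ K)).out)
            have h2 := hb v w
            have := Submodule.add_mem (covIdeal Γ K) h1 h2
            convert this using 1
            abel
end

section
/- Let S be an additive abelian group. On the complex vector space L_S with basis {L_{α,β} : α,β ∈ S}, the bilinear product determined by L_{α,β} · L_{μ,ν} = δ_{α+μ, β−ν}·L_{α+μ, α+ν} is associative. Moreover, the bilinear form ⟨·,·⟩ on L_S determined by ⟨L_{α,β}, L_{μ,ν}⟩ = δ_{α+μ,0}·δ_{β,ν} is symmetric, non-degenerate, and associative, i.e., ⟨a·b, c⟩ = ⟨a, b·c⟩ for all a, b, c ∈ L_S. -/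
open scoped Classical

/-- The underlying vector space of `L_S`: finitely supported functions on `S × S`,
with standard basis `{L_{α,β} : α, β ∈ S}`. -/
abbrev LSpace (S : Type*) := (S × S) →₀ ℂ

/-- The basis element `L_{α,β}`. -/
noncomputable def Lgen {S : Type*} (α β : S) : LSpace S := Finsupp.single (α, β) 1

/-- The product of two basis elements:
`L_{α,β} · L_{μ,ν} = δ_{α+μ, β−ν} · L_{α+μ, α+ν}`. -/
noncomputable def LmulBasis {S : Type*} [AddCommGroup S] (p q : S × S) : LSpace S :=
  if p.1 + q.1 = p.2 - q.2 then Finsupp.single (p.1 + q.1, p.1 + q.2) 1 else 0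

/-- The bilinear product on `L_S` determined by its values on basis elements. -/
noncomputable def Lmul {S : Type*} [AddCommGroup S] (a b : LSpace S) : LSpace S :=
  a.sum fun p x => b.sum fun q y => (x * y) • LmulBasis p q

/-- The value of the bilinear form on two basis elements:
`⟨L_{α,β}, L_{μ,ν}⟩ = δ_{α+μ,0} · δ_{β,ν}`. -/
noncomputable def LformBasis {S : Type*} [AddCommGroup S] (p q : S × S) : ℂ :=
  if p.1 + q.1 = 0 ∧ p.2 = q.2 then 1 else 0

/-- The bilinear form on `L_S` determined by its values on basis elements. -/
noncomputable def Lform {S : Type*} [AddCommGroup S] (a b : LSpace S) : ℂ :=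
  a.sum fun p x => b.sum fun q y => x * y * LformBasis p q

/-!
Both the product and the form are bilinear, so every identity reduces to basis vectors. Writing
`p = (a, b)`, `q = (c, d)`, `r = (e, f)`, both `(L_p L_q) L_r` and `L_p (L_q L_r)` equal
`L_{a+c+e, a+c+f}` exactly when `d = c + e + f` and `b = a + 2c + e + f`, and vanish otherwise; the
same bookkeeping gives `⟨L_p L_q, L_r⟩ = ⟨L_p, L_q L_r⟩`. The form pairs `L_{α,β}` only with
`L_{-α,β}`, so pairing with `L_{-α,β}` reads off the `(α, β)`-coefficient, which gives
non-degeneracy.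
-/

open Finsupp

section

variable {S : Type*} [AddCommGroup S]

noncomputable def LmulBilin : LSpace S →ₗ[ℂ] LSpace S →ₗ[ℂ] LSpace S :=
  linearCombination ℂ fun p => linearCombination ℂ (LmulBasis p)

noncomputable def LformBilin : LinearMap.BilinForm ℂ (LSpace S) :=
  linearCombination ℂ fun p => linearCombination ℂ (LformBasis p)

theorem LmulBilin_apply (a b : LSpace S) : LmulBilin a b = Lmul a b := by
  simp [LmulBilin, Lmul, linearCombination_apply, LinearMap.finsupp_sum_apply, Finsupp.smul_sum,
    smul_smul]

theorem LformBilin_apply (a b : LSpace S) : LformBilin a b = Lform a b := by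
  simp [LformBilin, Lform, linearCombination_apply, LinearMap.finsupp_sum_apply, Finsupp.mul_sum,
    mul_assoc]

@[simp]
theorem LmulBilin_single (p q : S × S) :
    LmulBilin (single p 1) (single q 1) = LmulBasis p q := by
  simp [LmulBilin]

@[simp]
theorem LformBilin_single (p q : S × S) :
    LformBilin (single p 1) (single q 1) = LformBasis p q := by
  simp [LformBilin]

theorem LmulBasis_assoc (p q r : S × S) :
    LmulBilin (LmulBasis p q) (single r 1) = LmulBilin (single p 1) (LmulBasis q r) := by
  rcases p with ⟨a, b⟩; rcases q with ⟨c, d⟩; rcases r with ⟨e, f⟩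
  simp only [LmulBasis, apply_ite LmulBilin, DFunLike.ite_apply, apply_ite (LmulBilin (single _ 1)),
    map_zero, LinearMap.zero_apply, LmulBilin_single, ← ite_and, add_assoc]
  refine if_congr ?_ rfl rfl
  grind

theorem LformBilin_LmulBasis_assoc (p q r : S × S) :
    LformBilin (LmulBasis p q) (single r 1) = LformBilin (single p 1) (LmulBasis q r) := by
  rcases p with ⟨a, b⟩; rcases q with ⟨c, d⟩; rcases r with ⟨e, f⟩
  simp only [LmulBasis, LformBasis, apply_ite LformBilin, DFunLike.ite_apply,
    apply_ite (LformBilin (single _ 1)), map_zero, LinearMap.zero_apply, LformBilin_single,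
    ← ite_and, add_assoc]
  refine if_congr ?_ rfl rfl
  grind

theorem LformBasis_comm (p q : S × S) : LformBasis p q = LformBasis q p := by
  simp only [LformBasis, add_comm q.1, eq_comm (a := q.2)]

theorem LformBilin_isSymm : (LformBilin : LinearMap.BilinForm ℂ (LSpace S)).IsSymm := by
  refine LinearMap.BilinForm.isSymm_iff_flip.mpr ?_
  ext p q : 4
  simpa using LformBasis_comm q p

theorem LformBilin_single_right (a : LSpace S) (q : S × S) :
    LformBilin a (single q 1) = a (-q.1, q.2) := by
  suffices h : LformBilin.flip (single q 1) = lapply (-q.1, q.2) from congr($h a)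
  ext p : 2
  simp [LformBasis, single_apply, eq_neg_iff_add_eq_zero, Prod.ext_iff, eq_comm]

theorem LformBilin_separatingLeft :
    (LformBilin : LinearMap.BilinForm ℂ (LSpace S)).SeparatingLeft := by
  intro a h
  ext ⟨α, β⟩
  simpa [LformBilin_single_right] using h (single (-α, β) 1)

theorem Lmul_assoc (a b c : LSpace S) : Lmul (Lmul a b) c = Lmul a (Lmul b c) := by
  simp only [← LmulBilin_apply]
  suffices h : LmulBilin.compr₂ LmulBilin =
      (LinearMap.llcomp ℂ _ _ _ ∘ₗ LmulBilin).compl₂ LmulBilin from congr($h a b c)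
  ext p q r : 6
  simpa using LmulBasis_assoc p q r

theorem Lform_Lmul_assoc (a b c : LSpace S) : Lform (Lmul a b) c = Lform a (Lmul b c) := by
  simp only [← LmulBilin_apply, ← LformBilin_apply]
  suffices h : LmulBilin.compr₂ LformBilin =
      (LinearMap.llcomp ℂ _ _ _ ∘ₗ LformBilin).compl₂ LmulBilin from congr($h a b c)
  ext p q r : 6
  simpa using LformBilin_LmulBasis_assoc p q r

end

theorem stmt6 {S : Type*} [AddCommGroup S] :
    -- the product is associative
    (∀ a b c : LSpace S, Lmul (Lmul a b) c = Lmul a (Lmul b c)) ∧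
    -- the form is symmetric
    (∀ a b : LSpace S, Lform a b = Lform b a) ∧
    -- the form is non-degenerate
    (∀ a : LSpace S, (∀ b : LSpace S, Lform a b = 0) → a = 0) ∧
    -- the form is associative: `⟨a·b, c⟩ = ⟨a, b·c⟩`
    (∀ a b c : LSpace S, Lform (Lmul a b) c = Lform a (Lmul b c)) := by
  refine ⟨Lmul_assoc, fun a b => ?_, fun a ha => LformBilin_separatingLeft a fun b => ?_,
    Lform_Lmul_assoc⟩
  · simpa only [LformBilin_apply] using LformBilin_isSymm.eq a b
  · simpa only [LformBilin_apply] using ha b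
end

section
/- Let S be an additive abelian group. For each γ ∈ S, the linear map σ_γ : L_S → L_S determined by σ_γ(L_{α,β}) = L_{α,β+γ} is an algebra automorphism of L_S (it is bijective and satisfies σ_γ(a·b) = σ_γ(a)·σ_γ(b)); these maps define an action of S on L_S, i.e., σ_0 = id and σ_γ ∘ σ_δ = σ_{γ+δ}; and each σ_γ preserves the bilinear form: ⟨σ_γ(a), σ_γ(b)⟩ = ⟨a, b⟩ for all a, b ∈ L_S. -/
open scoped Classical

/-- The translation map `σ_γ : L_S → L_S`, `σ_γ(L_{α,β}) = L_{α,β+γ}`. -/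
noncomputable def sigmaL {S : Type*} [AddCommGroup S] (γ : S) (a : LSpace S) : LSpace S :=
  a.sum fun p x => Finsupp.single (p.1, p.2 + γ) x

section Aux
variable {S : Type*} [AddCommGroup S]

def shiftE (γ : S) : (S × S) ≃ (S × S) := (Equiv.refl S).prodCongr (Equiv.addRight γ)

lemma sigmaL_eq_mapDomain (γ : S) (a : LSpace S) :
    sigmaL γ a = Finsupp.mapDomain (shiftE γ) a := rfl

lemma sigmaL_add (γ : S) (a b : LSpace S) :
    sigmaL γ (a + b) = sigmaL γ a + sigmaL γ b := by
  simp [sigmaL_eq_mapDomain, Finsupp.mapDomain_add]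

lemma sigmaL_smul (γ : S) (c : ℂ) (a : LSpace S) :
    sigmaL γ (c • a) = c • sigmaL γ a := by
  simp [sigmaL_eq_mapDomain, Finsupp.mapDomain_smul]

lemma sigmaL_single (γ : S) (p : S × S) (c : ℂ) :
    sigmaL γ (Finsupp.single p c) = Finsupp.single (p.1, p.2 + γ) c := by
  rw [sigmaL_eq_mapDomain, Finsupp.mapDomain_single]; rfl

lemma sigmaL_LmulBasis (γ : S) (p q : S × S) :
    sigmaL γ (LmulBasis p q) = LmulBasis (shiftE γ p) (shiftE γ q) := by
  simp only [LmulBasis, shiftE, Equiv.prodCongr_apply, Equiv.coe_refl, Prod.map,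
    Equiv.coe_addRight, id_eq]
  split
  · rw [sigmaL_single]
    simp only [add_sub_add_right_eq_sub, *, if_true, add_assoc]
  · simp only [add_sub_add_right_eq_sub, *, if_false]
    simp [sigmaL]

lemma sigmaL_finsupp_sum (γ : S) (a : LSpace S) (g : S × S → ℂ → LSpace S) :
    sigmaL γ (a.sum g) = a.sum fun p x => sigmaL γ (g p x) := by
  simp only [sigmaL_eq_mapDomain]
  exact map_finsuppSum (Finsupp.mapDomain.addMonoidHom (shiftE γ)) a g

end Aux


theorem stmt7 {S : Type*} [AddCommGroup S] :
    -- each σ_γ takes the prescribed values on basis elements and is ℂ-linear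
    (∀ (γ α β : S), sigmaL γ (Lgen α β) = Lgen α (β + γ)) ∧
    (∀ (γ : S) (a b : LSpace S), sigmaL γ (a + b) = sigmaL γ a + sigmaL γ b) ∧
    (∀ (γ : S) (c : ℂ) (a : LSpace S), sigmaL γ (c • a) = c • sigmaL γ a) ∧
    -- each σ_γ is an algebra automorphism
    (∀ γ : S, Function.Bijective (sigmaL (S := S) γ)) ∧
    (∀ (γ : S) (a b : LSpace S), sigmaL γ (Lmul a b) = Lmul (sigmaL γ a) (sigmaL γ b)) ∧
    -- the maps σ_γ define an action of S on L_S
    (sigmaL (S := S) 0 = id) ∧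
    (∀ γ δ : S, sigmaL (S := S) γ ∘ sigmaL δ = sigmaL (γ + δ)) ∧
    -- each σ_γ preserves the bilinear form
    (∀ (γ : S) (a b : LSpace S), Lform (sigmaL γ a) (sigmaL γ b) = Lform a b) := by
  refine ⟨fun γ α β => ?_, sigmaL_add, sigmaL_smul, fun γ => ?_, fun γ a b => ?_, ?_,
    fun γ δ => ?_, fun γ a b => ?_⟩
  · simpa [Lgen] using sigmaL_single γ (α, β) 1
  · have : (sigmaL (S := S) γ) = Finsupp.equivMapDomain (shiftE γ) := by
      funext a
      rw [sigmaL_eq_mapDomain, ← Finsupp.equivMapDomain_eq_mapDomain]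
    rw [this]
    exact (Finsupp.equivCongrLeft (shiftE γ)).bijective
  · have hinj : Function.Injective (shiftE (S := S) γ) := (shiftE γ).injective
    have hrhs : Lmul (sigmaL γ a) (sigmaL γ b)
        = a.sum fun p x => b.sum fun q y => (x * y) • LmulBasis (shiftE γ p) (shiftE γ q) := by
      rw [Lmul, sigmaL_eq_mapDomain γ a, sigmaL_eq_mapDomain γ b,
        Finsupp.sum_mapDomain_index_inj hinj]
      congr 1; funext p x
      rw [Finsupp.sum_mapDomain_index_inj hinj]
    rw [hrhs, Lmul, sigmaL_finsupp_sum]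
    congr 1; funext p x
    rw [sigmaL_finsupp_sum]
    congr 1; funext q y
    rw [sigmaL_smul, sigmaL_LmulBasis]
  · funext a
    rw [sigmaL_eq_mapDomain]
    have : shiftE (0 : S) = Equiv.refl _ := by ext p <;> simp [shiftE]
    simp [this, Finsupp.mapDomain_id]
  · funext a
    simp only [Function.comp_apply, sigmaL_eq_mapDomain, ← Finsupp.mapDomain_comp]
    congr 1
    funext p
    simp [shiftE, Prod.map, add_assoc, add_comm γ δ]
  · have hinj : Function.Injective (shiftE (S := S) γ) := (shiftE γ).injective
    rw [Lform, sigmaL_eq_mapDomain γ a, sigmaL_eq_mapDomain γ b,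
      Finsupp.sum_mapDomain_index_inj hinj]
    rw [Lform]
    congr 1; funext p x
    rw [Finsupp.sum_mapDomain_index_inj hinj]
    congr 1; funext q y
    congr 1
    simp [LformBasis, shiftE]
end

section
/- Let S be an additive abelian group and set S⁰ = {α ∈ S : 2α = 0}. The linear map π : L_S → gl_S determined by π(L_{α,β}) = E_{α+β, β−α} is an algebra homomorphism (π(a·b) = π(a)·π(b)); it intertwines the translation actions, π ∘ σ_γ = σ'_γ ∘ π for all γ ∈ S, where σ_γ(L_{α,β}) = L_{α,β+γ} and σ'_γ(E_{α,β}) = E_{α+γ,β+γ}; and it satisfies π ∘ τ = τ' ∘ π, where τ(L_{α,β}) = −L_{−α,β} and τ'(E_{α,β}) = −E_{β,α}. If S⁰ = {0}, then π is injective and preserves the bilinear forms: ⟨π(a), π(b)⟩ = ⟨a, b⟩. If in addition 2S = S (in particular whenever S is finite of odd order), then π is bijective, hence an algebra isomorphism. -/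
open scoped Classical

/-- The Lie algebra automorphism `τ` of `L_S`: `τ(L_{α,β}) = −L_{−α,β}`. -/
noncomputable def tauL {S : Type*} [AddCommGroup S] (a : LSpace S) : LSpace S :=
  a.sum fun p x => Finsupp.single (-p.1, p.2) (-x)

/-- The underlying vector space of `gl_S`: finitely supported functions on `S × S`,
with standard basis `{E_{α,β} : α, β ∈ S}`. -/
abbrev GlSpace (S : Type*) := (S × S) →₀ ℂ

/-- Matrix product of two basis elements: `E_{α,β} · E_{μ,ν} = δ_{β,μ} · E_{α,ν}`. -/
noncomputable def GlmulBasis {S : Type*} (p q : S × S) : GlSpace S :=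
  if p.2 = q.1 then Finsupp.single (p.1, q.2) 1 else 0

/-- The bilinear matrix product on `gl_S`. -/
noncomputable def Glmul {S : Type*} (a b : GlSpace S) : GlSpace S :=
  a.sum fun p x => b.sum fun q y => (x * y) • GlmulBasis p q

/-- The bilinear form on `gl_S`: `⟨E_{α,β}, E_{μ,ν}⟩ = δ_{α,ν} · δ_{β,μ}`. -/
noncomputable def Glform {S : Type*} (a b : GlSpace S) : ℂ :=
  a.sum fun p x => b.sum fun q y => x * y * (if p.1 = q.2 ∧ p.2 = q.1 then 1 else 0)

/-- The translation map `σ'_γ : gl_S → gl_S`, `σ'_γ(E_{α,β}) = E_{α+γ,β+γ}`. -/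
noncomputable def sigmaGl {S : Type*} [AddCommGroup S] (γ : S) (a : GlSpace S) : GlSpace S :=
  a.sum fun p x => Finsupp.single (p.1 + γ, p.2 + γ) x

/-- The map `τ' : gl_S → gl_S`, `τ'(E_{α,β}) = −E_{β,α}`. -/
noncomputable def tauGl {S : Type*} (a : GlSpace S) : GlSpace S :=
  a.sum fun p x => Finsupp.single (p.2, p.1) (-x)

/-- The linear map `π : L_S → gl_S`, `π(L_{α,β}) = E_{α+β, β−α}`. -/
noncomputable def piLGl {S : Type*} [AddCommGroup S] (a : LSpace S) : GlSpace S :=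
  a.sum fun p x => Finsupp.single (p.1 + p.2, p.2 - p.1) x


/-!
`π` is the pushforward of finitely supported functions along the index map
`(α, β) ↦ (α + β, β − α)` on `S × S`, so every claim reduces to a property of this map. It
carries the structure constants of `L_S` to those of `gl_S` (the condition `α + μ = β − ν` is
`β − α = μ + ν`), it commutes with the translations, and it conjugates `(α, β) ↦ (−α, β)` into
the transposition `(x, y) ↦ (y, x)`. Since `(α + β) + (β − α) = 2β`, it is injective when `S`
has no `2`-torsion, and `(β, u − β)` with `2β = u − v` is a preimage of `(u, v)`. For a group of
odd order, doubling is a bijection.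
-/

open Finsupp

section BilinSum

variable {α β R M N : Type*} [CommSemiring R] [AddCommMonoid M] [Module R M]
  [AddCommMonoid N] [Module R N]

noncomputable def bilinSum (m : α → α → M) (a b : α →₀ R) : M :=
  a.sum fun p x => b.sum fun q y => (x * y) • m p q

theorem map_bilinSum (g : M →ₗ[R] N) (m : α → α → M) (a b : α →₀ R) :
    g (bilinSum m a b) = bilinSum (fun p q => g (m p q)) a b := by
  simp only [bilinSum, map_finsuppSum, map_smul]

theorem bilinSum_mapDomain (f : α → β) (m : β → β → M) (a b : α →₀ R) :
    bilinSum m (mapDomain f a) (mapDomain f b) = bilinSum (fun p q => m (f p) (f q)) a b := by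
  unfold bilinSum
  rw [sum_mapDomain_index (by simp) fun p x₁ x₂ => by simp only [← sum_add, add_mul, add_smul]]
  refine sum_congr fun p _ => ?_
  rw [sum_mapDomain_index (by simp) fun q y₁ y₂ => by rw [mul_add, add_smul]]

end BilinSum

theorem Finsupp.sum_single_neg {α β G : Type*} [AddCommGroup G] (g : α → β) (a : α →₀ G) :
    (a.sum fun p x => single (g p) (-x)) = -mapDomain g a := by
  simp only [mapDomain, sum, single_neg, Finset.sum_neg_distrib]

theorem Finsupp.mapDomain_neg {α β G : Type*} [AddCommGroup G] (f : α → β) (a : α →₀ G) :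
    mapDomain f (-a) = -mapDomain f a :=
  map_neg (mapDomain.addMonoidHom f) a

theorem Finsupp.mapDomain_mapDomain_comm {α β β' γ M : Type*} [AddCommMonoid M]
    {f : α → β} {g : β → γ} {f' : α → β'} {g' : β' → γ} (h : g ∘ f = g' ∘ f') (a : α →₀ M) :
    mapDomain g (mapDomain f a) = mapDomain g' (mapDomain f' a) := by
  rw [← mapDomain_comp, h, mapDomain_comp]

theorem tauGl_eq_neg_mapDomain {S : Type*} (a : GlSpace S) : tauGl a = -mapDomain Prod.swap a :=
  sum_single_neg _ a

section PiIndex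

variable {S : Type*} [AddCommGroup S]

def piIndex (p : S × S) : S × S := (p.1 + p.2, p.2 - p.1)

theorem piLGl_eq_mapDomain (a : LSpace S) : piLGl a = mapDomain piIndex a := rfl

theorem sigmaL_eq_mapDomain_s8 (γ : S) (a : LSpace S) :
    sigmaL γ a = mapDomain (fun p => (p.1, p.2 + γ)) a := rfl

theorem sigmaGl_eq_mapDomain (γ : S) (a : GlSpace S) :
    sigmaGl γ a = mapDomain (fun p => (p.1 + γ, p.2 + γ)) a := rfl

theorem tauL_eq_neg_mapDomain (a : LSpace S) :
    tauL a = -mapDomain (fun p => (-p.1, p.2)) a :=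
  sum_single_neg _ a

theorem piIndex_injective (h0 : ∀ α : S, α + α = 0 → α = 0) :
    Function.Injective (piIndex (S := S)) := by
  rintro ⟨p₁, p₂⟩ ⟨q₁, q₂⟩ h
  simp only [piIndex, Prod.mk.injEq] at h
  obtain ⟨h₁, h₂⟩ := h
  have hp₂ : p₂ = q₂ := by
    rw [← sub_eq_zero]
    exact h0 _ (by linear_combination (norm := abel_nf) h₁ + h₂)
  subst hp₂
  simpa using h₁

theorem piIndex_surjective (h2 : ∀ α : S, ∃ β : S, β + β = α) :
    Function.Surjective (piIndex (S := S)) := by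
  rintro ⟨u, v⟩
  obtain ⟨β, hβ⟩ := h2 (u - v)
  refine ⟨(β, u - β), ?_⟩
  simp only [piIndex, Prod.mk.injEq]
  exact ⟨by abel, by linear_combination (norm := abel_nf) -hβ⟩

theorem mapDomain_piIndex_LmulBasis (p q : S × S) :
    mapDomain piIndex (LmulBasis p q) = GlmulBasis (piIndex p) (piIndex q) := by
  obtain ⟨p₁, p₂⟩ := p
  obtain ⟨q₁, q₂⟩ := q
  have hcond : p₁ + q₁ = p₂ - q₂ ↔ p₂ - p₁ = q₁ + q₂ :=
    ⟨fun h => by linear_combination (norm := abel_nf) -h,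
      fun h => by linear_combination (norm := abel_nf) -h⟩
  unfold LmulBasis GlmulBasis
  split_ifs with h h' h'
  · rw [mapDomain_single]
    congr 1
    simp only [piIndex, Prod.mk.injEq]
    exact ⟨by linear_combination (norm := abel_nf) h, by abel⟩
  · exact absurd (hcond.mp h) h'
  · exact absurd (hcond.mpr h') h
  · exact mapDomain_zero

theorem swap_piIndex (p : S × S) : (piIndex p).swap = piIndex (-p.1, p.2) := by
  simp only [piIndex, Prod.swap_prod_mk, Prod.mk.injEq]
  constructor <;> abel

theorem piIndex_transpose_iff (h0 : ∀ α : S, α + α = 0 → α = 0) (p q : S × S) :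
    (piIndex p).1 = (piIndex q).2 ∧ (piIndex p).2 = (piIndex q).1 ↔ p.1 + q.1 = 0 ∧ p.2 = q.2 := by
  calc _ ↔ piIndex p = (piIndex q).swap := Prod.ext_iff.symm
    _ ↔ p = (-q.1, q.2) := by rw [swap_piIndex, (piIndex_injective h0).eq_iff]
    _ ↔ _ := by rw [Prod.ext_iff, eq_neg_iff_add_eq_zero]

theorem piLGl_Lmul (a b : LSpace S) : piLGl (Lmul a b) = Glmul (piLGl a) (piLGl b) := by
  change lmapDomain ℂ ℂ piIndex (bilinSum LmulBasis a b) =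
    bilinSum GlmulBasis (mapDomain piIndex a) (mapDomain piIndex b)
  rw [map_bilinSum, bilinSum_mapDomain]
  simp only [lmapDomain_apply, mapDomain_piIndex_LmulBasis]

theorem piLGl_sigmaL (γ : S) (a : LSpace S) : piLGl (sigmaL γ a) = sigmaGl γ (piLGl a) := by
  rw [sigmaL_eq_mapDomain_s8, sigmaGl_eq_mapDomain, piLGl_eq_mapDomain, piLGl_eq_mapDomain]
  refine mapDomain_mapDomain_comm (funext fun p => ?_) a
  simp only [Function.comp_apply, piIndex, Prod.mk.injEq]
  constructor <;> abel

theorem piLGl_tauL (a : LSpace S) : piLGl (tauL a) = tauGl (piLGl a) := by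
  rw [tauL_eq_neg_mapDomain, tauGl_eq_neg_mapDomain, piLGl_eq_mapDomain, piLGl_eq_mapDomain,
    mapDomain_neg]
  refine congrArg Neg.neg (mapDomain_mapDomain_comm (funext fun p => ?_) a)
  exact (swap_piIndex p).symm

theorem Glform_piLGl (h0 : ∀ α : S, α + α = 0 → α = 0) (a b : LSpace S) :
    Glform (piLGl a) (piLGl b) = Lform a b := by
  change bilinSum (fun p q => if p.1 = q.2 ∧ p.2 = q.1 then (1 : ℂ) else 0)
    (mapDomain piIndex a) (mapDomain piIndex b) = bilinSum LformBasis a b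
  simp only [bilinSum_mapDomain, piIndex_transpose_iff h0]
  rfl

theorem piLGl_injective (h0 : ∀ α : S, α + α = 0 → α = 0) :
    Function.Injective (piLGl (S := S)) :=
  mapDomain_injective (piIndex_injective h0)

theorem piLGl_surjective (h2 : ∀ α : S, ∃ β : S, β + β = α) :
    Function.Surjective (piLGl (S := S)) :=
  mapDomain_surjective (piIndex_surjective h2)

end PiIndex

theorem bijective_add_self_of_odd_card {S : Type*} [AddCommGroup S] (hodd : Odd (Nat.card S)) :
    Function.Bijective fun α : S => α + α := by
  simpa only [two_nsmul] using
    Nat.Coprime.nsmul_right_bijective (G := S) (n := 2) (Nat.coprime_two_right.mpr hodd)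

theorem stmt8 {S : Type*} [AddCommGroup S] :
    -- π is an algebra homomorphism
    (∀ a b : LSpace S, piLGl (Lmul a b) = Glmul (piLGl a) (piLGl b)) ∧
    -- π intertwines the translation actions
    (∀ (γ : S) (a : LSpace S), piLGl (sigmaL γ a) = sigmaGl γ (piLGl a)) ∧
    -- π ∘ τ = τ' ∘ π
    (∀ a : LSpace S, piLGl (tauL a) = tauGl (piLGl a)) ∧
    -- if S⁰ = 0 then π is injective and preserves the bilinear forms
    ((∀ α : S, α + α = 0 → α = 0) →
      Function.Injective (piLGl (S := S)) ∧
      ∀ a b : LSpace S, Glform (piLGl a) (piLGl b) = Lform a b) ∧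
    -- if moreover 2S = S, then π is an algebra isomorphism
    ((∀ α : S, α + α = 0 → α = 0) → (∀ α : S, ∃ β : S, β + β = α) →
      Function.Bijective (piLGl (S := S))) ∧
    -- in particular, π is bijective whenever S is finite of odd order
    (Finite S → Odd (Nat.card S) → Function.Bijective (piLGl (S := S))) := by
  have hbij (h0 : ∀ α : S, α + α = 0 → α = 0) (h2 : ∀ α : S, ∃ β : S, β + β = α) :
      Function.Bijective (piLGl (S := S)) :=
    ⟨piLGl_injective h0, piLGl_surjective h2⟩
  refine ⟨piLGl_Lmul, piLGl_sigmaL, piLGl_tauL, fun h0 => ⟨piLGl_injective h0, Glform_piLGl h0⟩,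
    hbij, fun _ hodd => ?_⟩
  obtain ⟨hinj, hsurj⟩ := bijective_add_self_of_odd_card hodd
  exact hbij (fun α hα => hinj (hα.trans (add_zero 0).symm)) hsurj
end

section
/- Fix an integer l ≥ 1 and let S = ℤ/2lℤ with the character χ([m]) = ω^m, where ω = e^{πi/l}. Let a_{r,m} = ω^{rm}·Q^r·P^m ∈ M_l(ℂ) as usual. Then the linear map θ_A : Â_S → M_l(ℂ[t,t⁻¹]) determined by θ_A(c) = 0 and θ_A(A_{[r],m}) = t^m·a_{r,m} for r, m ∈ ℤ is well defined (since a_{r+2l,m} = a_{r,m}) and is a homomorphism of complex Lie algebras, where M_l(ℂ[t,t⁻¹]) carries the commutator bracket. Its range equals span_ℂ{ t^m·a_{r,m} : r, m ∈ ℤ }, and its kernel equals span_ℂ( {c} ∪ { A_{[r+l],m} − (−1)^m·A_{[r],m} : r, m ∈ ℤ } ). -/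
/-!
Everything reduces to the entries `(a_{r,m})_{i,j} = [j = i + m] ω^{rm + 2r(i+1)}`. They give
`a_{r,m} a_{s,n} = ω^{ms-nr} a_{r+s,m+n}`, whence the bracket relation
`[θ A_{α,m}, θ A_{β,n}] = (χ(mβ - nα) - χ(nα - mβ)) θ A_{α+β,m+n}`, and
`a_{r+lk,m} = (-1)^{km} a_{r,m}`, whence periodicity and the vanishing of `θ` on the relations.
For the kernel, the `t^m a_{r,m}` with `0 ≤ r < l` are linearly independent: the coefficient
of `t^m` in the entry `(i, i + m)` is a Vandermonde system in the distinct nodes `ζ^{i+1}`.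
Modulo the relations every `A_{α,m}` with `l ≤ α.val` can be folded onto `A_{α-l,m}`, so an
element of the kernel of `θ` is congruent to a combination of independent elements, which must
vanish.
-/

open scoped Classical
open Complex Matrix LaurentPolynomial

/-! The matrices `a_{r,m}`. -/

/-- The `l×l` complex matrix algebra, with rows and columns indexed cyclically. -/
abbrev MatL (l : ℕ) := Matrix (ZMod l) (ZMod l) ℂ

/-- `ζ = e^{2πi/l}`. -/
noncomputable def zetaL (l : ℕ) : ℂ := Complex.exp (2 * Real.pi * Complex.I / l)

/-- `ω = e^{πi/l}`. -/
noncomputable def omegaL (l : ℕ) : ℂ := Complex.exp (Real.pi * Complex.I / l)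

/-- The cyclic permutation matrix `P` (with `P_{i,i+1} = 1` cyclically). -/
noncomputable def Pmat (l : ℕ) : MatL l :=
  Matrix.of fun i j => if j = i + 1 then (1 : ℂ) else 0

/-- The diagonal matrix `Q = diag(ζ, ζ², …, ζ^l)`. -/
noncomputable def Qmat (l : ℕ) : MatL l :=
  Matrix.of fun i j => if i = j then zetaL l ^ (i.val + 1) else 0

/-- The matrices `a_{r,m} = ω^{rm} · Q^r · P^m` for `r, m ∈ ℤ`. -/
noncomputable def amat (l : ℕ) [NeZero l] (r m : ℤ) : MatL l :=
  omegaL l ^ (r * m) • (Qmat l ^ r * Pmat l ^ m)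

/-- The character `χ : ℤ/2lℤ → ℂˣ`, `χ([m]) = ω^m`. -/
noncomputable def chiTwoL (l : ℕ) : ZMod (2 * l) → ℂˣ := fun x =>
  Units.mk0 (omegaL l ^ x.val) (pow_ne_zero _ (Complex.exp_ne_zero _))

/-- `t^m · a_{r,m}`, an element of `M_l(ℂ[t,t⁻¹])`. -/
noncomputable def laurentGen (l : ℕ) [NeZero l] (r m : ℤ) :
    Matrix (ZMod l) (ZMod l) (LaurentPolynomial ℂ) :=
  (LaurentPolynomial.T m : LaurentPolynomial ℂ) • (amat l r m).map (algebraMap ℂ (LaurentPolynomial ℂ))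

/-- The linear map `θ_A : Â_S → M_l(ℂ[t,t⁻¹])`, with `θ_A(c) = 0` and
`θ_A(A_{[r],m}) = t^m · a_{r,m}` (well defined since `a_{r+2l,m} = a_{r,m}`). -/
noncomputable def thetaA (l : ℕ) [NeZero l] (x : TrigA (ZMod (2 * l))) :
    Matrix (ZMod l) (ZMod l) (LaurentPolynomial ℂ) :=
  x.2.sum fun pm c => c • laurentGen l (pm.1.val : ℤ) pm.2


theorem zpow_eq_zpow_of_dvd_sub {G₀ : Type*} [GroupWithZero G₀] {x : G₀} (hx : x ≠ 0) {n : ℕ}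
    (h : x ^ n = 1) {a b : ℤ} (hab : (n : ℤ) ∣ a - b) : x ^ a = x ^ b := by
  obtain ⟨k, hk⟩ := hab
  rw [show a = b + n * k by linarith, zpow_add₀ hx, _root_.zpow_mul, zpow_natCast, h,
    _root_.one_zpow, mul_one]

theorem ZMod.dvd_val_add_intCast_sub {n : ℕ} [NeZero n] (i : ZMod n) (m : ℤ) :
    (n : ℤ) ∣ ((i + m).val : ℤ) - (i.val + m) := by
  rw [← ZMod.intCast_eq_intCast_iff_dvd_sub]
  push_cast [ZMod.natCast_val, ZMod.cast_id]
  rfl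

theorem ZMod.eq_zero_of_forall_sum_mul_pow_val_eq_zero {K : Type*} [CommRing K] [IsDomain K]
    {n : ℕ} [NeZero n] {x c : ZMod n → K} (hx : Function.Injective x)
    (h : ∀ i, ∑ β, c β * x i ^ β.val = 0) : c = 0 := by
  obtain ⟨k, rfl⟩ : ∃ k, n = k + 1 := Nat.exists_eq_succ_of_ne_zero (NeZero.ne n)
  -- `ZMod (k + 1)` is `Fin (k + 1)` by definition, and `ZMod.val` is `Fin.val`.
  exact Matrix.eq_zero_of_forall_index_sum_mul_pow_eq_zero hx h

theorem Matrix.zpow_eq_of_succ {n R : Type*} [Fintype n] [DecidableEq n] [CommRing R]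
    {M : Matrix n n R} {F : ℤ → Matrix n n R} (h0 : F 0 = 1)
    (hsucc : ∀ k, F (k + 1) = F k * M) (k : ℤ) : M ^ k = F k := by
  have hM : IsUnit M.det :=
    Matrix.isUnit_det_of_left_inverse (B := F (-1)) (by rw [← hsucc, neg_add_cancel, h0])
  induction k using Int.induction_on with
  | zero => rw [zpow_zero, h0]
  | succ k ih => rw [Matrix.zpow_add_one hM, ih, hsucc]
  | pred k ih =>
    rw [Matrix.zpow_sub_one hM, ih, ← sub_add_cancel (-(k : ℤ)) 1, hsucc, sub_add_cancel,
      Matrix.mul_assoc, Matrix.mul_nonsing_inv _ hM, Matrix.mul_one]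

theorem Matrix.map_algebraMap_smul {R A m n : Type*} [CommSemiring R] [Semiring A] [Algebra R A]
    (c : R) (M : Matrix m n R) : (c • M).map (algebraMap R A) = c • M.map (algebraMap R A) :=
  Matrix.map_smul _ c (fun a => by rw [smul_eq_mul, map_mul, Algebra.smul_def]) M

theorem Finsupp.ker_le_of_forall_single_sub_mem {ι R N : Type*} [CommRing R] [AddCommGroup N]
    [Module R N] (f : (ι →₀ R) →ₗ[R] N) (L : N →ₗ[R] ι →₀ R) {T : Submodule R (ι →₀ R)}
    (h : ∀ i, Finsupp.single i 1 - L (f (Finsupp.single i 1)) ∈ T) : LinearMap.ker f ≤ T := by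
  have hsub : ∀ x, x - L (f x) ∈ T := by
    intro x
    induction x using Finsupp.induction_linear with
    | zero => simp
    | add x y hx hy =>
      rw [map_add, map_add, add_sub_add_comm]
      exact T.add_mem hx hy
    | single i c =>
      rw [← mul_one c, ← Finsupp.smul_single', map_smul, map_smul, ← smul_sub]
      exact T.smul_mem c (h i)
  intro x hx
  simpa [LinearMap.mem_ker.mp hx] using hsub x

theorem Submodule.span_singleton_one_zero_union_image_inr {R M : Type*} [CommRing R]
    [AddCommGroup M] [Module R M] (T : Set M) :
    span R ({((1 : R), (0 : M))} ∪ LinearMap.inr R R M '' T) =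
      (span R T).comap (LinearMap.snd R R M) := by
  rw [comap_snd, ← Ideal.span_singleton_one, ← LinearMap.span_inl_union_inr, Set.image_singleton]
  rfl

section RootsOfUnity

variable (l : ℕ)

theorem zetaL_eq_omegaL_sq : zetaL l = omegaL l ^ 2 := by
  rw [omegaL, zetaL, ← Complex.exp_nat_mul]
  ring_nf

theorem omegaL_ne_zero : omegaL l ≠ 0 := Complex.exp_ne_zero _

theorem zetaL_ne_zero : zetaL l ≠ 0 := Complex.exp_ne_zero _

theorem omegaL_pow_eq_neg_one [NeZero l] : omegaL l ^ l = -1 := by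
  rw [omegaL, ← Complex.exp_nat_mul, mul_div_cancel₀ _ (Nat.cast_ne_zero.mpr (NeZero.ne l)),
    Complex.exp_pi_mul_I]

theorem omegaL_pow_two_mul_eq_one [NeZero l] : omegaL l ^ (2 * l) = 1 := by
  rw [pow_mul', omegaL_pow_eq_neg_one, neg_one_sq]

theorem omegaL_zpow_eq_of_dvd [NeZero l] {a b : ℤ} (h : ((2 * l : ℕ) : ℤ) ∣ a - b) :
    omegaL l ^ a = omegaL l ^ b :=
  zpow_eq_zpow_of_dvd_sub (omegaL_ne_zero l) (omegaL_pow_two_mul_eq_one l) h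

theorem isPrimitiveRoot_zetaL [NeZero l] : IsPrimitiveRoot (zetaL l) l := by
  simpa [zetaL] using Complex.isPrimitiveRoot_exp l (NeZero.ne l)

end RootsOfUnity

section

variable (l : ℕ) [NeZero l]

theorem Pmat_zpow (m : ℤ) :
    Pmat l ^ m = Matrix.of fun i j : ZMod l => if j = i + m then (1 : ℂ) else 0 := by
  refine Matrix.zpow_eq_of_succ
    (F := fun k : ℤ => Matrix.of fun i j : ZMod l => if j = i + k then (1 : ℂ) else 0)
    ?_ (fun k => ?_) m
  · ext i j
    simp [Matrix.one_apply, eq_comm]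
  · ext i j
    rw [Matrix.mul_apply, Finset.sum_eq_single (i + k) (by simp_all) (by simp)]
    simp [Pmat, add_assoc]

theorem Qmat_zpow (r : ℤ) :
    Qmat l ^ r = Matrix.diagonal fun i : ZMod l => zetaL l ^ (r * (i.val + 1 : ℕ)) := by
  refine Matrix.zpow_eq_of_succ
    (F := fun k : ℤ => Matrix.diagonal fun i : ZMod l => zetaL l ^ (k * (i.val + 1 : ℕ)))
    ?_ (fun k => ?_) r
  · simp
  · have hQ : Qmat l = Matrix.diagonal fun i => zetaL l ^ (i.val + 1) := by
      ext i j
      by_cases h : i = j <;> simp [Qmat, h]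
    rw [hQ, Matrix.diagonal_mul_diagonal]
    congr 1
    ext i
    rw [add_mul, one_mul, zpow_add₀ (zetaL_ne_zero l), zpow_natCast]

theorem amat_apply (r m : ℤ) (i j : ZMod l) :
    amat l r m i j =
      if j = i + m then omegaL l ^ (r * m + 2 * r * (i.val + 1 : ℕ)) else 0 := by
  rw [amat, Qmat_zpow, Pmat_zpow, Matrix.smul_apply, Matrix.diagonal_mul, Matrix.of_apply,
    zetaL_eq_omegaL_sq, ← zpow_natCast, ← _root_.zpow_mul, zpow_add₀ (omegaL_ne_zero l)]
  split_ifs <;> simp only [mul_one, mul_zero, smul_eq_mul, Nat.cast_ofNat]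
  ring_nf

theorem amat_add_mul (r k m : ℤ) : amat l (r + l * k) m = (-1 : ℂ) ^ (k * m) • amat l r m := by
  ext i j
  rw [Matrix.smul_apply, amat_apply, amat_apply]
  split_ifs
  · have hexp : (r + l * k) * m + 2 * (r + l * k) * (i.val + 1 : ℕ) =
        (r * m + 2 * r * (i.val + 1 : ℕ)) + l * (k * m) +
          ((2 * l : ℕ) : ℤ) * (k * (i.val + 1)) := by
      push_cast
      ring
    rw [hexp, zpow_add₀ (omegaL_ne_zero l), zpow_add₀ (omegaL_ne_zero l),
      _root_.zpow_mul _ (l : ℤ), _root_.zpow_mul _ ((2 * l : ℕ) : ℤ), zpow_natCast, zpow_natCast,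
      omegaL_pow_eq_neg_one, omegaL_pow_two_mul_eq_one, _root_.one_zpow, mul_one, smul_eq_mul,
      mul_comm]
  · rw [smul_zero]

theorem amat_congr {r r' : ℤ} (h : ((2 * l : ℕ) : ℤ) ∣ r - r') (m : ℤ) :
    amat l r m = amat l r' m := by
  obtain ⟨k, hk⟩ := h
  rw [show r = r' + l * (2 * k) by push_cast at hk; linarith, amat_add_mul,
    mul_assoc, _root_.zpow_mul, zpow_ofNat, neg_one_sq, _root_.one_zpow, one_smul]

theorem amat_mul (r m s n : ℤ) :
    amat l r m * amat l s n = omegaL l ^ (m * s - n * r) • amat l (r + s) (m + n) := by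
  ext i j
  rw [Matrix.mul_apply, Finset.sum_eq_single (i + m) (fun k _ hk => by simp [amat_apply, hk])
    (by simp), Matrix.smul_apply, amat_apply, amat_apply, amat_apply, if_pos rfl]
  simp only [Int.cast_add, ← add_assoc]
  split_ifs
  · rw [smul_eq_mul, ← zpow_add₀ (omegaL_ne_zero l), ← zpow_add₀ (omegaL_ne_zero l)]
    apply omegaL_zpow_eq_of_dvd
    obtain ⟨d, hd⟩ := ZMod.dvd_val_add_intCast_sub i m
    exact ⟨s * d, by push_cast at hd ⊢; linear_combination 2 * s * hd⟩
  · rw [mul_zero, smul_zero]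

theorem laurentGen_mul (r m s n : ℤ) :
    laurentGen l r m * laurentGen l s n =
      omegaL l ^ (m * s - n * r) • laurentGen l (r + s) (m + n) := by
  rw [laurentGen, laurentGen, laurentGen, smul_mul_smul_comm, ← Matrix.map_mul, amat_mul,
    Matrix.map_algebraMap_smul, ← LaurentPolynomial.T_add, smul_comm]

theorem laurentGen_add_mul (r k m : ℤ) :
    laurentGen l (r + l * k) m = (-1 : ℂ) ^ (k * m) • laurentGen l r m := by
  rw [laurentGen, laurentGen, amat_add_mul, Matrix.map_algebraMap_smul, smul_comm]

theorem laurentGen_congr {r r' : ℤ} (h : ((2 * l : ℕ) : ℤ) ∣ r - r') (m : ℤ) :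
    laurentGen l r m = laurentGen l r' m := by
  rw [laurentGen, laurentGen, amat_congr l h]

/-- `θ_A(A_{α,m})`, with `α` represented by `α.val ∈ [0, 2l)`. -/
noncomputable def laurentGenTwoL (p : ZMod (2 * l) × ℤ) :
    Matrix (ZMod l) (ZMod l) (LaurentPolynomial ℂ) :=
  laurentGen l p.1.val p.2

theorem laurentGenTwoL_intCast (r m : ℤ) :
    laurentGenTwoL l ((r : ZMod (2 * l)), m) = laurentGen l r m :=
  laurentGen_congr l (by rw [← ZMod.intCast_eq_intCast_iff_dvd_sub]; simp) m

noncomputable def thetaALinear :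
    TrigA (ZMod (2 * l)) →ₗ[ℂ] Matrix (ZMod l) (ZMod l) (LaurentPolynomial ℂ) :=
  Finsupp.linearCombination ℂ (laurentGenTwoL l) ∘ₗ LinearMap.snd ℂ ℂ _

theorem thetaALinear_apply (x : TrigA (ZMod (2 * l))) : thetaALinear l x = thetaA l x := rfl

theorem thetaA_Agen (r m : ℤ) : thetaA l (Agen (r : ZMod (2 * l)) m) = laurentGen l r m := by
  rw [← thetaALinear_apply, thetaALinear, LinearMap.comp_apply, LinearMap.snd_apply, Agen,
    Finsupp.linearCombination_single, one_smul, laurentGenTwoL_intCast]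

theorem chiTwoL_eq {x : ZMod (2 * l)} {a : ℤ} (h : (a : ZMod (2 * l)) = x) :
    (chiTwoL l x : ℂ) = omegaL l ^ a := by
  rw [chiTwoL, Units.val_mk0, ← zpow_natCast]
  apply omegaL_zpow_eq_of_dvd
  rw [← ZMod.intCast_eq_intCast_iff_dvd_sub, ← h]
  simp

theorem thetaA_AbrkBasis (p q : ZMod (2 * l) × ℤ) :
    thetaA l (AbrkBasis (chiTwoL l) p q) =
      laurentGenTwoL l p * laurentGenTwoL l q - laurentGenTwoL l q * laurentGenTwoL l p := by
  obtain ⟨⟨α, m⟩, ⟨β, n⟩⟩ := p, q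
  have hsum : laurentGenTwoL l (α + β, m + n) = laurentGen l (α.val + β.val) (m + n) := by
    rw [← laurentGenTwoL_intCast]
    simp
  rw [← thetaALinear_apply, thetaALinear, LinearMap.comp_apply, LinearMap.snd_apply, AbrkBasis,
    Finsupp.linearCombination_single]
  dsimp only
  rw [hsum, laurentGenTwoL, laurentGenTwoL, laurentGen_mul, laurentGen_mul,
    add_comm (β.val : ℤ), add_comm n, ← sub_smul,
    chiTwoL_eq l (a := m * β.val - n * α.val) (by simp [zsmul_eq_mul]),
    chiTwoL_eq l (a := n * α.val - m * β.val) (by simp [zsmul_eq_mul])]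

theorem thetaA_Abrk (x y : TrigA (ZMod (2 * l))) :
    thetaA l (Abrk (chiTwoL l) x y) = thetaA l x * thetaA l y - thetaA l y * thetaA l x := by
  simp only [← thetaALinear_apply, Abrk, map_finsuppSum, map_smul]
  simp only [thetaALinear_apply, thetaA_AbrkBasis]
  rw [thetaA, thetaA]
  simp only [Finsupp.sum_mul, Finsupp.mul_sum, smul_mul_smul_comm]
  rw [Finsupp.sum_comm y.2 x.2, ← Finsupp.sum_sub]
  refine Finsupp.sum_congr fun p _ => ?_
  rw [← Finsupp.sum_sub]
  refine Finsupp.sum_congr fun q _ => ?_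
  rw [smul_sub, mul_comm (y.2 q)]
  rfl

theorem range_thetaA :
    Set.range (thetaA l) =
      Submodule.span ℂ {Y : Matrix (ZMod l) (ZMod l) (LaurentPolynomial ℂ) |
        ∃ r m : ℤ, Y = laurentGen l r m} := by
  have hrange : Set.range (laurentGenTwoL l) = {Y | ∃ r m : ℤ, Y = laurentGen l r m} := by
    ext Y
    constructor
    · rintro ⟨p, rfl⟩
      exact ⟨p.1.val, p.2, rfl⟩
    · rintro ⟨r, m, rfl⟩
      exact ⟨(r, m), laurentGenTwoL_intCast l r m⟩
  rw [← hrange, ← Finsupp.range_linearCombination, ← LinearMap.range_comp_of_range_eq_top _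
    (Submodule.range_snd (R := ℂ) (M := ℂ) (M₂ := (ZMod (2 * l) × ℤ) →₀ ℂ))]
  rfl

theorem laurentGen_apply_coeff (r m : ℤ) (i j : ZMod l) (m' : ℤ) :
    (laurentGen l r m i j).coeff m' = if m = m' then amat l r m i j else 0 := by
  rw [laurentGen, Matrix.smul_apply, Matrix.map_apply, smul_eq_mul, mul_comm,
    show algebraMap ℂ (LaurentPolynomial ℂ) (amat l r m i j) = LaurentPolynomial.C _ from rfl,
    ← LaurentPolynomial.single_eq_C_mul_T, AddMonoidAlgebra.coeff_single, Finsupp.single_apply]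

/-- The elements `t^m a_{r,m}` with `0 ≤ r < l`. -/
noncomputable def laurentGenL (q : ZMod l × ℤ) : Matrix (ZMod l) (ZMod l) (LaurentPolynomial ℂ) :=
  laurentGen l q.1.val q.2

theorem linearCombination_laurentGenL_apply_coeff (g : ZMod l × ℤ →₀ ℂ) (i j : ZMod l) (m : ℤ) :
    (Finsupp.linearCombination ℂ (laurentGenL l) g i j).coeff m =
      ∑ β, g (β, m) * amat l β.val m i j := by
  induction g using Finsupp.induction_linear with
  | zero => simp
  | add f g hf hg =>
    simp only [map_add, Matrix.add_apply, AddMonoidAlgebra.coeff_add, Finsupp.add_apply, hf, hg,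
      add_mul, Finset.sum_add_distrib]
  | single q c =>
    rw [Finsupp.linearCombination_single, Matrix.smul_apply, AddMonoidAlgebra.coeff_smul_apply,
      laurentGenL, laurentGen_apply_coeff,
      Finset.sum_eq_single q.1 (by simp_all [Prod.ext_iff]) (by simp)]
    by_cases h : q.2 = m <;> simp [h, Finsupp.single_apply, Prod.ext_iff]

theorem linearIndependent_laurentGenL : LinearIndependent ℂ (laurentGenL l) := by
  rw [linearIndependent_iff]
  intro g hg
  ext ⟨β₀, m⟩
  have hx : Function.Injective fun i : ZMod l => zetaL l ^ (i.val + 1) := by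
    intro a b hab
    simp only [pow_succ] at hab
    exact ZMod.val_injective l <| (isPrimitiveRoot_zetaL l).pow_inj (ZMod.val_lt a)
      (ZMod.val_lt b) (mul_right_cancel₀ (zetaL_ne_zero l) hab)
  have hc := ZMod.eq_zero_of_forall_sum_mul_pow_val_eq_zero hx
    (c := fun β => g (β, m) * omegaL l ^ ((β.val : ℤ) * m)) fun i => by
      have h := linearCombination_laurentGenL_apply_coeff l g i (i + m) m
      simp only [hg, Matrix.zero_apply, AddMonoidAlgebra.coeff_zero, Finsupp.zero_apply] at h
      rw [h]
      refine Finset.sum_congr rfl fun β _ => ?_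
      rw [amat_apply, if_pos rfl, mul_assoc, zpow_add₀ (omegaL_ne_zero l), zetaL_eq_omegaL_sq,
        ← pow_mul, ← pow_mul, ← zpow_natCast (omegaL l) (2 * _)]
      push_cast
      ring_nf
  exact (mul_eq_zero.mp (congrFun hc β₀)).resolve_right (zpow_ne_zero _ (omegaL_ne_zero l))

/-- Expresses `θ_A(A_{α,m})` through `laurentGenL`, by `a_{r + lk, m} = (-1)^{km} a_{r,m}`. -/
noncomputable def foldTwoL (p : ZMod (2 * l) × ℤ) : ZMod l × ℤ →₀ ℂ :=
  (-1 : ℂ) ^ ((p.1.val / l : ℕ) * p.2 : ℤ) • Finsupp.single ((p.1.val : ZMod l), p.2) 1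

theorem linearCombination_laurentGenTwoL :
    Finsupp.linearCombination ℂ (laurentGenTwoL l) =
      Finsupp.linearCombination ℂ (laurentGenL l) ∘ₗ Finsupp.linearCombination ℂ (foldTwoL l) := by
  have hfold : ∀ p, laurentGenTwoL l p =
      Finsupp.linearCombination ℂ (laurentGenL l) (foldTwoL l p) := by
    rintro ⟨α, m⟩
    rw [foldTwoL, map_smul, Finsupp.linearCombination_single, one_smul, laurentGenL,
      laurentGenTwoL, ZMod.val_natCast, ← laurentGen_add_mul, ← Nat.cast_mul, ← Nat.cast_add,
      Nat.mod_add_div]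
  refine LinearMap.ext fun f => ?_
  rw [LinearMap.comp_apply, Finsupp.linearCombination_linearCombination, ← funext hfold]

def kernelRelations : Set (ZMod (2 * l) × ℤ →₀ ℂ) :=
  {f | ∃ r m : ℤ, f = Finsupp.single (((r + l : ℤ) : ZMod (2 * l)), m) 1
    - ((-1 : ℂ) ^ m) • Finsupp.single ((r : ZMod (2 * l)), m) 1}

theorem span_kernelRelations_le :
    Submodule.span ℂ (kernelRelations l) ≤
      LinearMap.ker (Finsupp.linearCombination ℂ (laurentGenTwoL l)) := by
  rw [Submodule.span_le]
  rintro _ ⟨r, m, rfl⟩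
  have h := laurentGen_add_mul l r 1 m
  rw [mul_one, one_mul] at h
  rw [SetLike.mem_coe, LinearMap.mem_ker, map_sub, map_smul, Finsupp.linearCombination_single,
    Finsupp.linearCombination_single, one_smul, one_smul, laurentGenTwoL_intCast,
    laurentGenTwoL_intCast, h, sub_self]

theorem single_sub_mem_span_kernelRelations (p : ZMod (2 * l) × ℤ) :
    Finsupp.single p 1 -
        Finsupp.lmapDomain ℂ ℂ (fun q : ZMod l × ℤ => ((q.1.val : ZMod (2 * l)), q.2))
          (Finsupp.linearCombination ℂ (foldTwoL l) (Finsupp.single p 1)) ∈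
      Submodule.span ℂ (kernelRelations l) := by
  obtain ⟨α, m⟩ := p
  rw [Finsupp.linearCombination_single, one_smul, foldTwoL, map_smul, Finsupp.lmapDomain_apply,
    Finsupp.mapDomain_single, ZMod.val_natCast]
  rcases lt_or_ge α.val l with hα | hα
  · rw [Nat.div_eq_of_lt hα, Nat.mod_eq_of_lt hα, ZMod.natCast_zmod_val]
    simp
  · have hlt := ZMod.val_lt α
    have hdiv : α.val / l = 1 := Nat.div_eq_of_lt_le (by omega) (by omega)
    rw [Nat.mod_eq_sub, hdiv, Nat.cast_one, one_mul, mul_one]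
    refine Submodule.subset_span ⟨(α.val - l : ℕ), m, ?_⟩
    push_cast [Nat.cast_sub hα]
    simp

theorem ker_linearCombination_laurentGenTwoL :
    LinearMap.ker (Finsupp.linearCombination ℂ (laurentGenTwoL l)) =
      Submodule.span ℂ (kernelRelations l) := by
  refine le_antisymm ?_ (span_kernelRelations_le l)
  rw [linearCombination_laurentGenTwoL, LinearMap.ker_comp_of_ker_eq_bot _
    (LinearMap.ker_eq_bot.mpr (linearIndependent_laurentGenL l))]
  exact Finsupp.ker_le_of_forall_single_sub_mem _ _ (single_sub_mem_span_kernelRelations l)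

theorem ker_thetaA :
    {x : TrigA (ZMod (2 * l)) | thetaA l x = 0} =
      Submodule.span ℂ ({Acen (ZMod (2 * l))} ∪
        {x : TrigA (ZMod (2 * l)) | ∃ r m : ℤ,
          x = Agen (((r + l : ℤ) : ZMod (2 * l))) m
            - ((-1 : ℂ) ^ m) • Agen ((r : ZMod (2 * l))) m}) := by
  have hrel : {x : TrigA (ZMod (2 * l)) | ∃ r m : ℤ,
      x = Agen (((r + l : ℤ) : ZMod (2 * l))) m - ((-1 : ℂ) ^ m) • Agen ((r : ZMod (2 * l))) m} =
      LinearMap.inr ℂ ℂ _ '' kernelRelations l := by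
    ext x
    constructor
    · rintro ⟨r, m, rfl⟩
      exact ⟨_, ⟨r, m, rfl⟩, Prod.ext (by simp [Agen]) (by simp [Agen])⟩
    · rintro ⟨_, ⟨r, m, rfl⟩, rfl⟩
      exact ⟨r, m, Prod.ext (by simp [Agen]) (by simp [Agen])⟩
  rw [hrel, Acen, Submodule.span_singleton_one_zero_union_image_inr,
    ← ker_linearCombination_laurentGenTwoL, ← LinearMap.ker_comp]
  rfl

end

theorem stmt13 (l : ℕ) [NeZero l] :
    -- well-definedness: `a_{r+2l,m} = a_{r,m}`
    (∀ r m : ℤ, amat l (r + 2 * l) m = amat l r m) ∧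
    -- `θ_A` is ℂ-linear, kills the central element, and sends `A_{[r],m}` to `t^m a_{r,m}`
    (∀ x y : TrigA (ZMod (2 * l)), thetaA l (x + y) = thetaA l x + thetaA l y) ∧
    (∀ (c : ℂ) (x : TrigA (ZMod (2 * l))), thetaA l (c • x) = c • thetaA l x) ∧
    thetaA l (Acen (ZMod (2 * l))) = 0 ∧
    (∀ r m : ℤ, thetaA l (Agen ((r : ZMod (2 * l))) m) = laurentGen l r m) ∧
    -- `θ_A` is a homomorphism of complex Lie algebras (commutator bracket on matrices)
    (∀ x y : TrigA (ZMod (2 * l)),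
      thetaA l (Abrk (chiTwoL l) x y) = thetaA l x * thetaA l y - thetaA l y * thetaA l x) ∧
    -- its range is the span of the `t^m a_{r,m}` ...
    Set.range (thetaA l) =
      (Submodule.span ℂ {Y : Matrix (ZMod l) (ZMod l) (LaurentPolynomial ℂ) |
        ∃ r m : ℤ, Y = laurentGen l r m} : Set _) ∧
    -- ... and its kernel is spanned by `c` and the elements `A_{[r+l],m} − (−1)^m A_{[r],m}`
    {x : TrigA (ZMod (2 * l)) | thetaA l x = 0} =
      (Submodule.span ℂ ({Acen (ZMod (2 * l))} ∪
        {x : TrigA (ZMod (2 * l)) | ∃ r m : ℤ,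
          x = Agen (((r + l : ℤ) : ZMod (2 * l))) m
            - ((-1 : ℂ) ^ m) • Agen ((r : ZMod (2 * l))) m}) : Set _) :=
  ⟨fun r m => amat_congr l ⟨1, by push_cast; ring⟩ m, map_add (thetaALinear l),
    map_smul (thetaALinear l), Finsupp.sum_zero_index, thetaA_Agen l, thetaA_Abrk l,
    range_thetaA l, ker_thetaA l⟩
end
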